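/- arXiv:2605.04031 — 6 statements merged into one kernel-verified Lean document; each statement's English description precedes it below -/
import Mathlib

section
/- Fix an integer R ≥ 1. Let g : ℕ → ℝ be bounded and R-convex, meaning g(n−r) + g(n+r) ≥ 2·g(n) whenever r ≥ R and the terms are defined. Then lim_{n→∞} g(n) exists. -/
open Filter

/-- A bounded `R`-convex function `g : ℕ → ℝ` (meaning
`g (n-r) + g (n+r) ≥ 2·g n` whenever `R ≤ r ≤ n`) has a limit at infinity. -/
theorem stmt2 (R : ℕ) (hR : 1 ≤ R) (g : ℕ → ℝ)
    (hbdd : ∃ M : ℝ, ∀ n : ℕ, |g n| ≤ M)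
    (hconv : ∀ r n : ℕ, R ≤ r → r ≤ n → 2 * g n ≤ g (n - r) + g (n + r)) :
    ∃ L : ℝ, Tendsto g atTop (nhds L) := by
  obtain ⟨M, hM⟩ := hbdd
  have key : ∀ a r : ℕ, R ≤ r → ∃ L, Tendsto (fun k => g (a + k * r)) atTop (nhds L) := by
    intro a r hr
    have hr1 : 1 ≤ r := hR.trans hr
    set u : ℕ → ℝ := fun k => g (a + k * r) with hu
    have hconvu : ∀ k, 2 * u (k+1) ≤ u k + u (k+2) := by
      intro k
      have e1 : (k+1) * r = k * r + r := by ring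
      have e2 : (k+2) * r = k * r + 2 * r := by ring
      have h1 : a + (k+1) * r - r = a + k * r := by omega
      have h2 : a + (k+1) * r + r = a + (k+2) * r := by omega
      have := hconv r (a + (k+1)*r) hr (by omega)
      rw [h1, h2] at this
      exact this
    set d : ℕ → ℝ := fun k => u (k+1) - u k with hd
    have hdmono : Monotone d := by
      apply monotone_nat_of_le_succ
      intro k
      have := hconvu k
      simp only [hd]
      linarith
    have hdnonpos : ∀ k, d k ≤ 0 := by
      intro k0
      by_contra h
      push_neg at h
      have growth : ∀ n : ℕ, u k0 + n * d k0 ≤ u (k0 + n) := by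
        intro n
        induction n with
        | zero => simp
        | succ n ih =>
          have h1 : d k0 ≤ d (k0 + n) := hdmono (by omega)
          have h2 : u (k0 + n + 1) = u (k0 + n) + d (k0 + n) := by simp [hd]
          have : k0 + (n+1) = k0 + n + 1 := rfl
          rw [this, h2]
          push_cast
          push_cast at ih
          linarith
      obtain ⟨n, hn⟩ := exists_nat_gt ((M - u k0) / d k0)
      have h1 := growth n
      have h2 : u (k0 + n) ≤ M := (abs_le.mp (hM _)).2
      have h3 : (M - u k0) / d k0 * d k0 < n * d k0 :=
        mul_lt_mul_of_pos_right hn h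
      rw [div_mul_cancel₀ _ (ne_of_gt h)] at h3
      linarith
    have hant : Antitone u := by
      apply antitone_nat_of_succ_le
      intro k
      have := hdnonpos k
      simp only [hd] at this
      linarith
    have hbdd : BddBelow (Set.range u) := by
      refine ⟨-M, ?_⟩
      rintro x ⟨k, rfl⟩
      exact (abs_le.mp (hM _)).1
    exact ⟨_, tendsto_atTop_ciInf hant hbdd⟩
  choose Lf hLf using fun a => key a R le_rfl
  choose Mf hMf using fun a => key a (R+1) (by omega)
  have hmulR : Tendsto (fun k : ℕ => k * R) atTop atTop :=
    tendsto_atTop_mono (fun k => Nat.le_mul_of_pos_right k (by omega)) tendsto_id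
  have hmulR1 : Tendsto (fun k : ℕ => k * (R+1)) atTop atTop :=
    tendsto_atTop_mono (fun k => Nat.le_mul_of_pos_right k (by omega)) tendsto_id
  have hLM : ∀ a, Lf a = Mf a := by
    intro a
    have t1 : Tendsto (fun k : ℕ => g (a + k * (R * (R+1)))) atTop (nhds (Lf a)) := by
      have h := (hLf a).comp hmulR1
      have e : (fun k : ℕ => g (a + k * (R * (R+1)))) =
          (fun k => g (a + k * R)) ∘ (fun k : ℕ => k * (R+1)) := by
        funext k
        simp only [Function.comp_apply]
        congr 1
        ring
      rw [e]; exact h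
    have t2 : Tendsto (fun k : ℕ => g (a + k * (R * (R+1)))) atTop (nhds (Mf a)) := by
      have h := (hMf a).comp hmulR
      have e : (fun k : ℕ => g (a + k * (R * (R+1)))) =
          (fun k => g (a + k * (R+1))) ∘ (fun k : ℕ => k * R) := by
        funext k
        simp only [Function.comp_apply]
        congr 1
        ring
      rw [e]; exact h
    exact tendsto_nhds_unique t1 t2
  have hshiftL : ∀ a, Lf (a + R) = Lf a := by
    intro a
    have h := (hLf a).comp (tendsto_add_atTop_nat 1)
    have e : (fun k => g (a + k * R)) ∘ (fun k : ℕ => k + 1) =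
        fun k : ℕ => g (a + R + k * R) := by
      funext k
      simp only [Function.comp_apply]
      congr 1
      ring
    rw [e] at h
    exact tendsto_nhds_unique (hLf (a + R)) h
  have hshiftM : ∀ a, Mf (a + (R+1)) = Mf a := by
    intro a
    have h := (hMf a).comp (tendsto_add_atTop_nat 1)
    have e : (fun k => g (a + k * (R+1))) ∘ (fun k : ℕ => k + 1) =
        fun k : ℕ => g (a + (R+1) + k * (R+1)) := by
      funext k
      simp only [Function.comp_apply]
      congr 1
      ring
    rw [e] at h
    exact tendsto_nhds_unique (hMf (a + (R+1))) h
  have hsucc : ∀ a, Lf (a + 1) = Lf a := by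
    intro a
    calc Lf (a + 1) = Lf (a + 1 + R) := (hshiftL (a+1)).symm
      _ = Mf (a + 1 + R) := hLM _
      _ = Mf (a + (R+1)) := by congr 1; ring
      _ = Mf a := hshiftM a
      _ = Lf a := (hLM a).symm
  have hall : ∀ a, Lf a = Lf 0 := by
    intro a
    induction a with
    | zero => rfl
    | succ n ih => exact (hsucc n).trans ih
  refine ⟨Lf 0, ?_⟩
  rw [Metric.tendsto_atTop]
  intro ε hε
  have hN : ∀ a : ℕ, ∃ N, ∀ k ≥ N, dist (g (a + k * R)) (Lf a) < ε := by
    intro a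
    exact Metric.tendsto_atTop.mp (hLf a) ε hε
  choose N hNs using hN
  set K := (Finset.range R).sup N with hK
  refine ⟨R * (K + 1), fun n hn => ?_⟩
  have hRpos : 0 < R := hR
  have ha : n % R < R := Nat.mod_lt _ hRpos
  have hk : K + 1 ≤ n / R := (Nat.le_div_iff_mul_le hRpos).mpr (by linarith [hn, Nat.mul_comm R (K+1)])
  have hNa : N (n % R) ≤ n / R := by
    have := Finset.le_sup (f := N) (Finset.mem_range.mpr ha)
    omega
  have hna : n % R + (n / R) * R = n := by
    rw [mul_comm]; exact Nat.mod_add_div n R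
  have := hNs (n % R) (n / R) hNa
  rw [hna, hall (n % R)] at this
  exact this
end

section
/- Let T be an ℝ-tree and g an isometry of T. Then g either has a fixed point (elliptic), or it has an invariant geodesic line (axis) on which it translates by the positive distance ‖g‖ = inf_{x∈T} d(x, g·x) (hyperbolic). In particular, ‖g‖ = 0 if and only if g has a fixed point. -/
open Filter

/-- A geodesic metric space: every pair of points is joined by a geodesic segment. -/
def IsGeodesicSpace (T : Type*) [MetricSpace T] : Prop :=
  ∀ x y : T, ∃ f : ℝ → T, f 0 = x ∧ f (dist x y) = y ∧
    ∀ s ∈ Set.Icc (0 : ℝ) (dist x y), ∀ t ∈ Set.Icc (0 : ℝ) (dist x y),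
      dist (f s) (f t) = |s - t|

/-- The 0-hyperbolic four point condition. -/
def ZeroHyperbolic (T : Type*) [MetricSpace T] : Prop :=
  ∀ x y z w : T,
    dist x y + dist z w ≤ max (dist x z + dist y w) (dist x w + dist y z)

/-- An ℝ-tree is a geodesic, 0-hyperbolic metric space. -/
def IsRTree (T : Type*) [MetricSpace T] : Prop :=
  IsGeodesicSpace T ∧ ZeroHyperbolic T

/-- Translation length of an isometry. -/
noncomputable def translationLength {T : Type*} [MetricSpace T] (g : T ≃ᵢ T) : ℝ :=
  ⨅ x : T, dist x (g x)

section Aux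

variable {T : Type*} [MetricSpace T]

set_option maxHeartbeats 1000000 in
lemma rtree_aux (hT : IsRTree T) (g : T ≃ᵢ T) (x0 : T)
    (hD : dist x0 (g x0) < dist x0 (g (g x0))) :
    ∃ γ : ℝ → T, (∀ s t : ℝ, dist (γ s) (γ t) = |s - t|) ∧
      ∀ t : ℝ, g (γ t) = γ (t + (dist x0 (g (g x0)) - dist x0 (g x0))) := by
  have h4 := hT.2
  obtain ⟨f, hf0, hfd, hiso⟩ := hT.1 x0 (g x0)
  set d := dist x0 (g x0) with hd
  set D := dist x0 (g (g x0)) with hDdef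
  have hgd : ∀ a b : T, dist (g a) (g b) = dist a b := fun a b => g.dist_eq a b
  have hd2 : dist (g x0) (g (g x0)) = d := hgd x0 (g x0)
  have hDle : D ≤ 2 * d := by
    have := dist_triangle x0 (g x0) (g (g x0))
    rw [hd2] at this; linarith
  have hdpos : 0 < d := by linarith
  set L := D - d with hL
  have hLpos : 0 < L := by rw [hL]; linarith
  have hLne : L ≠ 0 := ne_of_gt hLpos
  have hff : ∀ s t : ℝ, 0 ≤ s → s ≤ d → 0 ≤ t → t ≤ d →
      dist (f s) (f t) = |s - t| := fun s t hs hs' ht ht' =>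
    hiso s ⟨hs, hs'⟩ t ⟨ht, ht'⟩
  -- basic distances
  have dpx0 : dist (f (D / 2)) x0 = D / 2 := by
    rw [← hf0, hff (D/2) 0 (by linarith) (by linarith) le_rfl hdpos.le,
      sub_zero, abs_of_nonneg (by linarith)]
  have dpg : dist (f (D / 2)) (g x0) = d - D / 2 := by
    rw [← hfd, hff (D/2) d (by linarith) (by linarith) hdpos.le le_rfl,
      abs_of_nonpos (by linarith)]
    ring
  have dqg : dist (g (f (d - D / 2))) (g x0) = d - D / 2 := by
    rw [hgd, ← hf0, hff (d - D/2) 0 (by linarith) (by linarith) le_rfl hdpos.le,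
      sub_zero, abs_of_nonneg (by linarith)]
  have dqgg : dist (g (f (d - D / 2))) (g (g x0)) = D / 2 := by
    rw [hgd, ← hfd, hff (d - D/2) d (by linarith) (by linarith) hdpos.le le_rfl,
      abs_of_nonpos (by linarith)]
    ring
  have dqx0 : dist (g (f (d - D / 2))) x0 ≤ D / 2 := by
    have h := h4 (g (f (d - D/2))) x0 (g x0) (g (g x0))
    rcases le_max_iff.mp h with h' | h' <;> linarith
  have dpgg : dist (f (D / 2)) (g (g x0)) ≤ D / 2 := by
    have h := h4 (f (D/2)) (g (g x0)) (g x0) x0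
    have c1 : dist (g (g x0)) x0 = D := by rw [dist_comm]
    have c2 : dist (g (g x0)) (g x0) = d := by rw [dist_comm]; exact hd2
    have c3 : dist (g x0) x0 = d := by rw [dist_comm]
    rcases le_max_iff.mp h with h' | h' <;> linarith
  have key : f (D / 2) = g (f (d - D / 2)) := by
    have h := h4 (f (D/2)) (g (f (d - D/2))) x0 (g (g x0))
    have hle : dist (f (D/2)) (g (f (d - D/2))) ≤ 0 := by
      rcases le_max_iff.mp h with h' | h' <;> linarith
    exact dist_le_zero.mp hle
  set y := f (D / 2) with hy
  have hyg : dist y (g y) = L := by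
    rw [key, hgd, ← key, hy,
      hff (d - D/2) (D/2) (by linarith) (by linarith) (by linarith) (by linarith),
      abs_of_nonpos (by linarith), hL]
    ring
  have dyx0 : dist y x0 = D / 2 := dpx0
  -- distance x0 to g^3 x0
  have h3 : 2 * D - d ≤ dist x0 (g (g (g x0))) := by
    have h := h4 x0 (g (g x0)) (g x0) (g (g (g x0)))
    have e1 : dist (g x0) (g (g (g x0))) = D := by rw [hgd]
    have e2 : dist (g (g x0)) (g (g (g x0))) = d := by rw [hgd, hgd]
    have e3 : dist (g (g x0)) (g x0) = d := by rw [dist_comm]; exact hd2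
    rcases le_max_iff.mp h with h' | h' <;> linarith
  -- base: dist y (g (g y)) = 2 L
  have base2 : dist y (g (g y)) = 2 * L := by
    have hub : dist y (g (g y)) ≤ 2 * L := by
      have h := dist_triangle y (g y) (g (g y))
      have : dist (g y) (g (g y)) = L := by rw [hgd]; exact hyg
      linarith
    have hlb : 2 * L ≤ dist y (g (g y)) := by
      have t1 := dist_triangle4 x0 y (g (g y)) (g (g (g x0)))
      have e1 : dist (g (g y)) (g (g (g x0))) = d - D / 2 := by
        rw [hgd, hgd, hy]; exact dpg
      have e2 : dist x0 y = D / 2 := by rw [dist_comm]; exact dyx0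
      rw [hL]; linarith
    linarith
  -- power basics
  have hone : ∀ x : T, (1 : T ≃ᵢ T) x = x := fun _ => rfl
  have hit : ∀ (n : ℤ) (x : T), (g ^ (n + 1)) x = g ((g ^ n) x) := by
    intro n x
    rw [add_comm, zpow_one_add, IsometryEquiv.coe_mul]; rfl
  have hit' : ∀ (n : ℤ) (x : T), (g ^ (n + 1)) x = (g ^ n) (g x) := by
    intro n x
    rw [zpow_add_one, IsometryEquiv.coe_mul]; rfl
  have hpd : ∀ (n : ℤ) (a b : T), dist ((g ^ n) a) ((g ^ n) b) = dist a b :=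
    fun n a b => (g ^ n).dist_eq a b
  have hg0 : ∀ x : T, (g ^ (0 : ℤ)) x = x := by
    intro x; rw [zpow_zero]; exact hone x
  have hg1 : ∀ x : T, (g ^ (1 : ℤ)) x = g x := by
    intro x; rw [zpow_one]
  -- the chain lemma
  have chainN : ∀ n : ℕ, dist y ((g ^ (n : ℤ)) y) = n * L ∧
      dist y ((g ^ ((n : ℤ) + 1)) y) = (n + 1) * L := by
    intro n
    induction n with
    | zero =>
      constructor
      · rw [show ((0:ℕ):ℤ) = 0 from rfl, hg0, dist_self]; norm_num
      · rw [show ((0:ℕ):ℤ) + 1 = 1 by norm_num, hg1, hyg]; norm_num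
    | succ m ih =>
      obtain ⟨ih1, ih2⟩ := ih
      have hcast : ((m + 1 : ℕ) : ℤ) = (m : ℤ) + 1 := by push_cast; ring
      refine ⟨by rw [hcast, ih2]; push_cast; ring, ?_⟩
      rw [hcast]
      rcases Nat.eq_zero_or_pos m with hm | hm
      · subst hm
        rw [show ((0:ℕ):ℤ) + 1 + 1 = 1 + 1 by norm_num, hit, hg1, base2]
        push_cast; ring
      · set N : ℤ := (m : ℤ) + 1 with hN
        have hq := h4 y ((g ^ N) y) (g y) ((g ^ (N + 1)) y)
        have e1 : dist ((g ^ N) y) ((g ^ (N + 1)) y) = L := by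
          rw [hit' N y, hpd, hyg]
        have e2 : dist (g y) ((g ^ (N + 1)) y) = ((m : ℝ) + 1) * L := by
          rw [hit N y, hgd, ih2]
        have e3 : dist ((g ^ N) y) (g y) = (m : ℝ) * L := by
          have hh : (g ^ N) y = g ((g ^ (m : ℤ)) y) := hit (m : ℤ) y
          rw [hh, hgd, dist_comm, ih1]
        have e4 : dist y ((g ^ N) y) = ((m : ℝ) + 1) * L := by
          rw [ih2]
        have hub : dist y ((g ^ (N + 1)) y) ≤ ((m : ℝ) + 2) * L := by
          have := dist_triangle y ((g ^ N) y) ((g ^ (N + 1)) y)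
          rw [e4, e1] at this; linarith
        have hmr : (1 : ℝ) ≤ (m : ℝ) := by exact_mod_cast hm
        rw [e1, e2, e3, e4, hyg] at hq
        have hgoal : dist y ((g ^ (N + 1)) y) = ((m : ℝ) + 2) * L := by
          rcases le_max_iff.mp hq with h' | h'
          · nlinarith
          · nlinarith
        rw [hgoal]; push_cast; ring
  have chain : ∀ n : ℤ, 0 ≤ n → dist y ((g ^ n) y) = n * L := by
    intro n hn
    lift n to ℕ using hn
    exact_mod_cast (chainN n).1
  -- the arc
  set c : ℝ → T := fun u => g (f (d - D / 2 + u)) with hc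
  have hcdist : ∀ u v : ℝ, 0 ≤ u → u ≤ L → 0 ≤ v → v ≤ L →
      dist (c u) (c v) = |u - v| := by
    intro u v hu hu' hv hv'
    rw [hL] at hu' hv'
    rw [hc]; simp only
    rw [hgd, hff _ _ (by linarith) (by linarith) (by linarith) (by linarith)]
    ring_nf
  have hc0 : c 0 = y := by rw [hc]; simp only; rw [add_zero, ← key]
  have hcL : c L = g y := by
    show g (f (d - D / 2 + L)) = g y
    rw [show d - D / 2 + L = D / 2 by rw [hL]; ring]
  -- the axis
  set γ : ℝ → T := fun t => (g ^ ⌊t / L⌋) (c (t - L * ⌊t / L⌋)) with hγ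
  have hrem : ∀ t : ℝ, 0 ≤ t - L * ⌊t / L⌋ ∧ t - L * ⌊t / L⌋ < L := by
    intro t
    constructor
    · have h1 := Int.floor_le (t / L)
      have h2 : L * ⌊t / L⌋ ≤ L * (t / L) := mul_le_mul_of_nonneg_left h1 hLpos.le
      rw [mul_div_cancel₀ _ hLne] at h2
      linarith
    · have h1 := Int.lt_floor_add_one (t / L)
      have h2 : L * (t / L) < L * (⌊t / L⌋ + 1) := mul_lt_mul_of_pos_left h1 hLpos
      rw [mul_div_cancel₀ _ hLne] at h2
      linarith
  have hγval : ∀ t : ℝ, γ t = (g ^ ⌊t / L⌋) (c (t - L * ⌊t / L⌋)) := fun t => rfl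
  have hfloor : ∀ (t : ℝ) (m : ℤ), ⌊(t + L * m) / L⌋ = ⌊t / L⌋ + m := by
    intro t m
    rw [show (t + L * (m : ℝ)) / L = t / L + (m : ℝ) by
      rw [add_div, mul_div_cancel_left₀ _ hLne], Int.floor_add_intCast]
  have hshift : ∀ (m : ℤ) (t : ℝ), γ (t + L * m) = (g ^ m) (γ t) := by
    intro m t
    rw [hγval, hγval, hfloor t m]
    have e1 : t + L * m - L * ((⌊t / L⌋ : ℤ) + m : ℤ) = t - L * ⌊t / L⌋ := by
      push_cast; ring
    rw [e1, add_comm (⌊t / L⌋) m, zpow_add, IsometryEquiv.coe_mul, Function.comp_apply]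
  have htrans : ∀ t : ℝ, g (γ t) = γ (t + L) := by
    intro t
    have h := hshift 1 t
    rw [Int.cast_one, mul_one, zpow_one] at h
    exact h.symm
  -- core distance computation
  have hcore : ∀ s t : ℝ, 0 ≤ s → s < L → s ≤ t → dist (γ s) (γ t) = t - s := by
    intro s t hs hsL hst
    have ht0 : 0 ≤ t := le_trans hs hst
    have hfs : ⌊s / L⌋ = 0 := by
      rw [Int.floor_eq_zero_iff]
      exact ⟨by positivity, (div_lt_one hLpos).mpr hsL⟩
    have hγs : γ s = c s := by
      rw [hγval, hfs]
      rw [Int.cast_zero, mul_zero, sub_zero, hg0]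
    set n : ℤ := ⌊t / L⌋ with hn
    have hrt := hrem t
    set r : ℝ := t - L * n with hr
    have hγt : γ t = (g ^ n) (c r) := hγval t
    have hn0 : 0 ≤ n := by
      rw [hn]
      exact Int.floor_nonneg.mpr (by positivity)
    have htnr : t = n * L + r := by rw [hr]; ring
    rcases eq_or_lt_of_le hn0 with hn1 | hn1
    · -- n = 0
      have hrt' : r = t := by rw [hr, ← hn1]; push_cast; ring
      rw [hγs, hγt, ← hn1, hg0, hrt',
        hcdist s t hs hsL.le ht0 (by rw [← hrt']; exact hrt.2.le),
        abs_of_nonpos (by linarith)]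
      ring
    · -- n ≥ 1
      have hn1' : (1 : ℤ) ≤ n := hn1
      have hn1r : (1 : ℝ) ≤ (n : ℝ) := by exact_mod_cast hn1'
      have hub : dist (γ s) (γ t) ≤ n * L + r - s := by
        have t1 := dist_triangle4 (γ s) (g y) ((g ^ n) y) (γ t)
        have e1 : dist (γ s) (g y) = L - s := by
          rw [hγs, ← hcL, hcdist s L hs hsL.le hLpos.le le_rfl,
            abs_of_nonpos (by linarith)]
          ring
        have e2 : dist (g y) ((g ^ n) y) = ((n : ℝ) - 1) * L := by
          have hh : (g ^ n) y = g ((g ^ (n - 1)) y) := by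
            have := hit (n - 1) y; rwa [sub_add_cancel] at this
          rw [hh, hgd, chain (n - 1) (by omega)]
          push_cast; ring
        have e3 : dist ((g ^ n) y) (γ t) = r := by
          rw [hγt, hpd, ← hc0, hcdist 0 r le_rfl hLpos.le hrt.1 hrt.2.le,
            abs_of_nonpos (by linarith [hrt.1]), zero_sub, neg_neg]
        rw [e1, e2, e3] at t1
        nlinarith [t1]
      have hlb : n * L + r - s ≤ dist (γ s) (γ t) := by
        have t1 := dist_triangle4 y (γ s) (γ t) ((g ^ (n + 1)) y)
        have e1 : dist y (γ s) = s := by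
          rw [hγs, ← hc0, hcdist 0 s le_rfl hLpos.le hs hsL.le,
            abs_of_nonpos (by linarith), zero_sub, neg_neg]
        have e2 : dist (γ t) ((g ^ (n + 1)) y) = L - r := by
          rw [hγt, hit' n y, hpd, ← hcL,
            hcdist r L hrt.1 hrt.2.le hLpos.le le_rfl,
            abs_of_nonpos (by linarith [hrt.2])]
          ring
        have e3 : dist y ((g ^ (n + 1)) y) = ((n : ℝ) + 1) * L := by
          rw [chain (n + 1) (by omega)]; push_cast; ring
        rw [e1, e2, e3] at t1
        nlinarith [t1]
      linarith [hub, hlb]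
  have hfull : ∀ s t : ℝ, s ≤ t → dist (γ s) (γ t) = t - s := by
    intro s t hst
    set m : ℤ := ⌊s / L⌋ with hm
    have hrs := hrem s
    have e1 : γ s = (g ^ m) (γ (s - L * m)) := by
      have h := hshift m (s - L * m)
      rw [sub_add_cancel] at h
      exact h
    have e2 : γ t = (g ^ m) (γ (t - L * m)) := by
      have h := hshift m (t - L * m)
      rw [sub_add_cancel] at h
      exact h
    rw [e1, e2, hpd, hcore (s - L * m) (t - L * m) hrs.1 hrs.2 (by linarith)]
    ring
  refine ⟨γ, ?_, fun t => htrans t⟩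
  intro s t
  rcases le_total s t with h | h
  · rw [hfull s t h, abs_of_nonpos (by linarith)]; ring
  · rw [dist_comm, hfull t s h, abs_of_nonneg (by linarith)]

end Aux

set_option maxHeartbeats 1000000 in
/-- An isometry of an ℝ-tree either has a fixed point (elliptic), or admits an
invariant geodesic line on which it translates by the positive distance
`‖g‖ = inf_x d(x, g x)`; moreover `‖g‖ = 0` iff `g` has a fixed point. -/
theorem stmt6 {T : Type*} [MetricSpace T] [Nonempty T] (hT : IsRTree T)
    (g : T ≃ᵢ T) :
    ((∃ x : T, g x = x) ∨
      (0 < translationLength g ∧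
        ∃ γ : ℝ → T, (∀ s t : ℝ, dist (γ s) (γ t) = |s - t|) ∧
          ∀ t : ℝ, g (γ t) = γ (t + translationLength g))) ∧
    (translationLength g = 0 ↔ ∃ x : T, g x = x) := by
  classical
  have bdd : BddBelow (Set.range fun x : T => dist x (g x)) := by
    refine ⟨0, ?_⟩
    rintro _ ⟨x, rfl⟩
    exact dist_nonneg
  have nonneg : 0 ≤ translationLength g :=
    Real.iInf_nonneg fun x => dist_nonneg
  have hfix0 : ∀ x : T, g x = x → translationLength g = 0 := by
    intro x hx
    refine le_antisymm ?_ nonneg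
    have h1 : translationLength g ≤ dist x (g x) := ciInf_le bdd x
    rw [hx, dist_self] at h1
    exact h1
  set x0 : T := Classical.arbitrary T with hx0
  by_cases hcase : dist x0 (g (g x0)) ≤ dist x0 (g x0)
  · -- elliptic: midpoint of [x0, g x0] is fixed
    obtain ⟨f, hf0, hfd, hiso⟩ := hT.1 x0 (g x0)
    set d := dist x0 (g x0) with hd
    have hdnn : 0 ≤ d := dist_nonneg
    have hgd : ∀ a b : T, dist (g a) (g b) = dist a b := fun a b => g.dist_eq a b
    have hd2 : dist (g x0) (g (g x0)) = d := hgd x0 (g x0)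
    have hff : ∀ s t : ℝ, 0 ≤ s → s ≤ d → 0 ≤ t → t ≤ d →
        dist (f s) (f t) = |s - t| := fun s t hs hs' ht ht' =>
      hiso s ⟨hs, hs'⟩ t ⟨ht, ht'⟩
    have dmx : dist (f (d/2)) x0 = d/2 := by
      rw [← hf0, hff (d/2) 0 (by linarith) (by linarith) le_rfl hdnn, sub_zero,
        abs_of_nonneg (by linarith)]
    have dmg : dist (f (d/2)) (g x0) = d/2 := by
      rw [← hfd, hff (d/2) d (by linarith) (by linarith) hdnn le_rfl,
        abs_of_nonpos (by linarith)]
      ring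
    have dgm1 : dist (g (f (d/2))) (g x0) = d/2 := by rw [hgd]; exact dmx
    have dgm2 : dist (g (f (d/2))) (g (g x0)) = d/2 := by rw [hgd]; exact dmg
    have dgmx : dist (g (f (d/2))) x0 ≤ d/2 := by
      have h := hT.2 (g (f (d/2))) x0 (g x0) (g (g x0))
      rcases le_max_iff.mp h with h' | h' <;> linarith
    have hm : g (f (d/2)) = f (d/2) := by
      have h := hT.2 (f (d/2)) (g (f (d/2))) x0 (g x0)
      have hle : dist (f (d/2)) (g (f (d/2))) ≤ 0 := by
        rcases le_max_iff.mp h with h' | h' <;> linarith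
      exact (dist_le_zero.mp hle).symm
    exact ⟨Or.inl ⟨f (d/2), hm⟩, ⟨fun _ => ⟨f (d/2), hm⟩, fun ⟨x, hx⟩ => hfix0 x hx⟩⟩
  · -- hyperbolic
    push_neg at hcase
    obtain ⟨γ, hγiso, hγtrans⟩ := rtree_aux hT g x0 hcase
    set L := dist x0 (g (g x0)) - dist x0 (g x0) with hL
    have hLpos : 0 < L := by rw [hL]; linarith
    have htl : translationLength g = L := by
      apply le_antisymm
      · calc translationLength g ≤ dist (γ 0) (g (γ 0)) := ciInf_le bdd (γ 0)
          _ = |0 - (0 + L)| := by rw [hγtrans 0, hγiso]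
          _ = L := by rw [zero_add, zero_sub, abs_neg, abs_of_nonneg hLpos.le]
      · apply le_ciInf
        intro z
        have hgiter : ∀ (n : ℕ) (a b : T),
            dist ((⇑g)^[n] a) ((⇑g)^[n] b) = dist a b := by
          intro n
          induction n with
          | zero => intro a b; simp
          | succ k ih =>
            intro a b
            rw [Function.iterate_succ_apply, Function.iterate_succ_apply, ih, g.dist_eq]
        have hgn : ∀ n : ℕ, (⇑g)^[n] (γ 0) = γ (n * L) := by
          intro n
          induction n with
          | zero => simp
          | succ k ih =>
            rw [Function.iterate_succ_apply', ih, hγtrans (k * L)]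
            congr 1
            push_cast; ring
        have hzn : ∀ n : ℕ, dist z ((⇑g)^[n] z) ≤ n * dist z (g z) := by
          intro n
          induction n with
          | zero => simp
          | succ k ih =>
            have t := dist_triangle z ((⇑g)^[k] z) ((⇑g)^[k+1] z)
            have e : dist ((⇑g)^[k] z) ((⇑g)^[k+1] z) = dist z (g z) := by
              rw [Function.iterate_succ_apply, hgiter]
            rw [e] at t
            push_cast
            calc dist z ((⇑g)^[k+1] z) ≤ (k : ℝ) * dist z (g z) + dist z (g z) := by
                  linarith
              _ = ((k : ℝ) + 1) * dist z (g z) := by ring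
        have hkey : ∀ n : ℕ, (n : ℝ) * L ≤ 2 * dist (γ 0) z + n * dist z (g z) := by
          intro n
          have h1 : dist (γ 0) (γ (n * L)) = n * L := by
            rw [hγiso, zero_sub, abs_neg, abs_of_nonneg (by positivity)]
          have e2 : dist ((⇑g)^[n] z) (γ (n * L)) = dist (γ 0) z := by
            rw [← hgn n, hgiter, dist_comm]
          calc (n : ℝ) * L = dist (γ 0) (γ (n * L)) := h1.symm
            _ ≤ dist (γ 0) z + dist z ((⇑g)^[n] z) + dist ((⇑g)^[n] z) (γ (n * L)) :=
              dist_triangle4 _ _ _ _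
            _ ≤ 2 * dist (γ 0) z + n * dist z (g z) := by
              rw [e2]; linarith [hzn n]
        by_contra hcon
        push_neg at hcon
        have hpos : 0 < L - dist z (g z) := by linarith
        obtain ⟨n, hn⟩ := exists_nat_gt (2 * dist (γ 0) z / (L - dist z (g z)))
        rw [div_lt_iff₀ hpos] at hn
        have hk := hkey n
        nlinarith
    constructor
    · right
      refine ⟨by rw [htl]; exact hLpos, γ, hγiso, fun t => ?_⟩
      rw [htl]
      exact hγtrans t
    · constructor
      · intro h0
        exfalso
        rw [htl] at h0
        exact hLpos.ne' h0
      · rintro ⟨x, hx⟩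
        exact hfix0 x hx
end

section
/- Let T be an ℝ-tree and let g, h be hyperbolic isometries of T whose axes T_g and T_h are disjoint. Then ‖gh‖ = ‖gH‖ = ‖g‖ + ‖h‖ + 2·d(T_g, T_h), where H = h⁻¹. -/
section Helpers

variable {T : Type*} [MetricSpace T]

lemma line_cont {γ : ℝ → T} (hγ : ∀ s t : ℝ, dist (γ s) (γ t) = |s - t|) :
    Continuous γ :=
  (Isometry.of_dist_eq (fun a b => by rw [hγ, Real.dist_eq])).continuous

lemma star_ineq (H : ZeroHyperbolic T) {γ : ℝ → T}
    (hγ : ∀ s t : ℝ, dist (γ s) (γ t) = |s - t|) (x : T)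
    {s1 s2 s3 : ℝ} (h12 : s1 ≤ s2) (h23 : s2 ≤ s3) :
    dist x (γ s2) ≤ max (dist x (γ s1) - (s2 - s1)) (dist x (γ s3) - (s3 - s2)) := by
  have h4 := H x (γ s2) (γ s1) (γ s3)
  rw [hγ s1 s3, hγ s2 s3, hγ s2 s1] at h4
  rw [abs_of_nonpos (by linarith : s1 - s3 ≤ 0), abs_of_nonpos (by linarith : s2 - s3 ≤ 0),
    abs_of_nonneg (by linarith : (0:ℝ) ≤ s2 - s1)] at h4
  rcases le_max_iff.mp h4 with hc | hc
  · exact le_max_of_le_left (by linarith)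
  · exact le_max_of_le_right (by linarith)

lemma exists_proj (H : ZeroHyperbolic T) {γ : ℝ → T}
    (hγ : ∀ s t : ℝ, dist (γ s) (γ t) = |s - t|) (x : T) :
    ∃ α : ℝ, ∀ s, dist x (γ s) = dist x (γ α) + |s - α| := by
  -- the minimum of `s ↦ dist x (γ s)` is attained
  obtain ⟨α, hmin⟩ : ∃ α : ℝ, ∀ s, dist x (γ α) ≤ dist x (γ s) := by
    have hc : Continuous fun s : ℝ => dist x (γ s) := continuous_const.dist (line_cont hγ)
    have hsub : {s : ℝ | dist x (γ s) ≤ dist x (γ 0)} ⊆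
        Set.Icc (-(2 * dist x (γ 0))) (2 * dist x (γ 0)) := by
      intro s hs
      simp only [Set.mem_setOf_eq] at hs
      have h1 : |s| ≤ 2 * dist x (γ 0) := by
        have h2 : dist (γ s) (γ 0) ≤ dist (γ s) x + dist x (γ 0) := dist_triangle _ _ _
        rw [hγ s 0, dist_comm (γ s) x] at h2
        simpa using (by linarith : |s - 0| ≤ 2 * dist x (γ 0))
      rw [Set.mem_Icc]
      exact ⟨by linarith [neg_abs_le s], by linarith [le_abs_self s]⟩
    have hM : IsCompact {s : ℝ | dist x (γ s) ≤ dist x (γ 0)} :=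
      (isCompact_Icc).of_isClosed_subset (isClosed_le hc continuous_const) hsub
    obtain ⟨α, hαM, hIsMin⟩ := hM.exists_isMinOn ⟨0, by simp⟩ hc.continuousOn
    refine ⟨α, fun s => ?_⟩
    by_cases hs : dist x (γ s) ≤ dist x (γ 0)
    · exact hIsMin hs
    · exact le_trans (hIsMin (by simp : (0:ℝ) ∈ {s : ℝ | dist x (γ s) ≤ dist x (γ 0)}))
        (le_of_not_ge hs)
  have oneside : ∀ (γ' : ℝ → T), (∀ s t : ℝ, dist (γ' s) (γ' t) = |s - t|) →
      (∀ s, dist x (γ' α) ≤ dist x (γ' s)) → ∀ s, α ≤ s →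
      dist x (γ' α) + (s - α) ≤ dist x (γ' s) := by
    intro γ' hγ' hmin' s hs
    refine le_of_forall_pos_le_add fun ε hε => ?_
    by_cases hcase : s - α ≤ ε
    · have := hmin' s; linarith
    · have hstar := star_ineq H hγ' x (s1 := α) (s2 := α + ε) (s3 := s)
        (by linarith) (by linarith)
      have h1 := hmin' (α + ε)
      rcases le_max_iff.mp hstar with hc | hc
      · linarith
      · linarith
  have hi : ∀ s, dist x (γ s) ≤ dist x (γ α) + |s - α| := by
    intro s
    have h2 := dist_triangle x (γ α) (γ s)
    rw [hγ α s, abs_sub_comm α s] at h2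
    exact h2
  refine ⟨α, fun s => ?_⟩
  rcases le_total α s with hle | hle
  · have lo := oneside γ hγ hmin s hle
    have hi' := hi s
    rw [abs_of_nonneg (by linarith : (0:ℝ) ≤ s - α)] at hi' ⊢
    linarith
  · have hγ' : ∀ u v : ℝ, dist (γ (2*α - u)) (γ (2*α - v)) = |u - v| := by
      intro u v
      rw [hγ, show (2*α - u) - (2*α - v) = -(u - v) by ring, abs_neg]
    have hmin' : ∀ u, dist x (γ (2*α - α)) ≤ dist x (γ (2*α - u)) := by
      intro u
      rw [show 2*α - α = α by ring]
      exact hmin _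
    have lo := oneside (fun u => γ (2*α - u)) hγ' hmin' (2*α - s) (by linarith)
    rw [show 2*α - (2*α - s) = s by ring, show 2*α - α = α by ring] at lo
    have hi' := hi s
    rw [abs_of_nonpos (by linarith : s - α ≤ 0)] at hi' ⊢
    linarith

lemma gate (H : ZeroHyperbolic T) {γ : ℝ → T}
    (hγ : ∀ s t : ℝ, dist (γ s) (γ t) = |s - t|) {x y : T} {α β : ℝ}
    (hx : ∀ s, dist x (γ s) = dist x (γ α) + |s - α|)
    (hy : ∀ s, dist y (γ s) = dist y (γ β) + |s - β|)
    (hαβ : α < β) :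
    dist x (γ α) + (β - α) + dist y (γ β) ≤ dist x y := by
  have h4 := H x (γ β) (γ α) y
  have e1 : dist x (γ β) = dist x (γ α) + (β - α) := by
    rw [hx β, abs_of_nonneg (by linarith : (0:ℝ) ≤ β - α)]
  have e2 : dist (γ α) y = dist y (γ β) + (β - α) := by
    rw [dist_comm, hy α, abs_of_nonpos (by linarith : α - β ≤ 0)]; ring
  have e3 : dist (γ β) (γ α) = β - α := by
    rw [hγ, abs_of_nonneg (by linarith : (0:ℝ) ≤ β - α)]
  have e4 : dist (γ β) y = dist y (γ β) := dist_comm _ _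
  rw [e1, e2, e3, e4] at h4
  rcases le_max_iff.mp h4 with hc | hc
  · linarith
  · linarith

lemma gate' (H : ZeroHyperbolic T) {γ : ℝ → T}
    (hγ : ∀ s t : ℝ, dist (γ s) (γ t) = |s - t|) {x y : T} {α β : ℝ}
    (hx : ∀ s, dist x (γ s) = dist x (γ α) + |s - α|)
    (hy : ∀ s, dist y (γ s) = dist y (γ β) + |s - β|)
    (hne : α ≠ β) :
    dist x (γ α) + |α - β| + dist y (γ β) ≤ dist x y := by
  rcases lt_or_gt_of_ne hne with hlt | hlt
  · rw [abs_of_nonpos (by linarith : α - β ≤ 0)]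
    have := gate H hγ hx hy hlt
    linarith
  · rw [abs_of_nonneg (by linarith : (0:ℝ) ≤ α - β)]
    have := gate H hγ hy hx hlt
    rw [dist_comm y x] at this
    linarith

lemma chain_step (H : ZeroHyperbolic T) {x0 xprev xcur xnext : T} {d1 d2 : ℝ}
    (h1 : dist xprev xcur = d1) (h2 : dist xcur xnext = d2)
    (hal : dist xprev xnext = d1 + d2) (hd1 : 0 < d1)
    (hprev : dist x0 xprev = dist x0 xcur - d1) :
    dist x0 xnext = dist x0 xcur + d2 := by
  have h4 := H x0 xcur xprev xnext
  have htr := dist_triangle x0 xcur xnext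
  rw [h2] at htr
  rw [hal, h2, hprev, dist_comm xcur xprev, h1] at h4
  rcases le_max_iff.mp h4 with hc | hc
  · linarith
  · linarith

end Helpers

lemma master {T : Type*} [MetricSpace T] [Nonempty T] (hT : IsRTree T)
    (g h : T ≃ᵢ T) (γg γh : ℝ → T)
    (hγg : ∀ s t : ℝ, dist (γg s) (γg t) = |s - t|)
    (hγh : ∀ s t : ℝ, dist (γh s) (γh t) = |s - t|)
    (hgpos : 0 < translationLength g) (hhpos : 0 < translationLength h)
    (hgtr : ∀ t : ℝ, g (γg t) = γg (t + translationLength g))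
    (hhtr : ∀ t : ℝ, h (γh t) = γh (t + translationLength h))
    (hdisj : Disjoint (Set.range γg) (Set.range γh)) :
    translationLength (g * h) =
      translationLength g + translationLength h +
        2 * sInf {d : ℝ | ∃ x ∈ Set.range γg, ∃ y ∈ Set.range γh, d = dist x y} := by
  obtain ⟨-, H⟩ := hT
  set lg := translationLength g with hlg
  set lh := translationLength h with hlh
  -- projections of points of γh onto the line γg
  choose P hP using fun t => exists_proj H hγg (γh t)
  -- P is 1-Lipschitz
  have Plip : ∀ t t' : ℝ, |P t - P t'| ≤ |t - t'| := by
    intro t t'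
    rcases eq_or_ne (P t) (P t') with heq | hne
    · rw [heq]; simpa using abs_nonneg (t - t')
    · have hg := gate' H hγg (hP t) (hP t') hne
      rw [hγh] at hg
      have d1 : (0:ℝ) ≤ dist (γh t) (γg (P t)) := dist_nonneg
      have d2 : (0:ℝ) ≤ dist (γh t') (γg (P t')) := dist_nonneg
      linarith
  have Pcont : Continuous P := by
    have : LipschitzWith 1 P := by
      apply LipschitzWith.of_dist_le_mul
      intro t t'
      rw [Real.dist_eq, Real.dist_eq]
      simpa using Plip t t'
    exact this.continuous
  -- P is constant
  have key : ∀ u v : ℝ, u < v → P u ≠ P v → False := by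
    intro u v huv hPne
    set c := (P u + P v) / 2 with hcdef
    have hcmem : c ∈ Set.uIcc (P u) (P v) := by
      rcases le_total (P u) (P v) with hle | hle
      · exact Set.mem_uIcc.mpr (Or.inl ⟨by rw [hcdef]; linarith, by rw [hcdef]; linarith⟩)
      · exact Set.mem_uIcc.mpr (Or.inr ⟨by rw [hcdef]; linarith, by rw [hcdef]; linarith⟩)
    obtain ⟨w, hw, hwc⟩ := intermediate_value_uIcc (Pcont.continuousOn) hcmem
    rw [Set.uIcc_of_le huv.le] at hw
    have hneu : P u ≠ P w := by
      rw [hwc, hcdef]; intro e; exact hPne (by linarith)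
    have hnev : P w ≠ P v := by
      rw [hwc, hcdef]; intro e; exact hPne (by linarith)
    have g1 := gate' H hγg (hP u) (hP w) hneu
    have g2 := gate' H hγg (hP w) (hP v) hnev
    rw [hγh, abs_of_nonpos (by linarith [hw.1] : u - w ≤ 0)] at g1
    rw [hγh, abs_of_nonpos (by linarith [hw.2] : w - v ≤ 0)] at g2
    have habs1 : |P u - P w| = |P u - P v| / 2 := by
      rw [hwc, show P u - c = (P u - P v) / 2 by rw [hcdef]; ring, abs_div]
      norm_num
    have habs2 : |P w - P v| = |P u - P v| / 2 := by
      rw [hwc, show c - P v = (P u - P v) / 2 by rw [hcdef]; ring, abs_div]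
      norm_num
    have htr : dist (γh u) (γh v) ≤ dist (γh u) (γg (P u)) + dist (γg (P u)) (γg (P v))
        + dist (γg (P v)) (γh v) := dist_triangle4 _ _ _ _
    rw [hγh, hγg, abs_of_nonpos (by linarith : u - v ≤ 0),
      dist_comm (γg (P v)) (γh v)] at htr
    have hmw : dist (γh w) (γg (P w)) ≤ 0 := by linarith
    have heqw : γh w = γg (P w) := dist_le_zero.mp hmw
    exact Set.disjoint_left.mp hdisj ⟨P w, heqw.symm⟩ ⟨w, rfl⟩
  have Pconst : ∀ t : ℝ, P t = P 0 := by
    intro t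
    by_contra hne
    rcases lt_trichotomy t 0 with hlt | heq | hgt
    · exact key t 0 hlt hne
    · exact hne (by rw [heq])
    · exact key 0 t hgt (Ne.symm hne)
  set a := P 0 with hadef
  have hPa : ∀ t s : ℝ, dist (γh t) (γg s) = dist (γh t) (γg a) + |s - a| := by
    intro t s
    have := hP t s
    rwa [Pconst t] at this
  -- projection of γg a onto the line γh
  obtain ⟨b, hb⟩ := exists_proj H hγh (γg a)
  set D := dist (γg a) (γh b) with hD
  -- the master distance formula between the two lines
  have F : ∀ s t : ℝ, dist (γg s) (γh t) = |s - a| + D + |t - b| := by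
    intro s t
    rw [dist_comm (γg s) (γh t), hPa t s, dist_comm (γh t) (γg a), hb t]
    ring
  have hDpos : 0 < D := by
    rw [hD]
    refine dist_pos.mpr fun e => ?_
    exact Set.disjoint_left.mp hdisj ⟨a, rfl⟩ ⟨b, e.symm⟩
  -- the infimum of distances between the lines is D
  have hS : sInf {d : ℝ | ∃ x ∈ Set.range γg, ∃ y ∈ Set.range γh, d = dist x y} = D := by
    apply le_antisymm
    · refine csInf_le ⟨0, ?_⟩ ?_
      · rintro d ⟨x, ⟨s, rfl⟩, y, ⟨t, rfl⟩, rfl⟩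
        exact dist_nonneg
      · exact ⟨γg a, ⟨a, rfl⟩, γh b, ⟨b, rfl⟩, hD⟩
    · refine le_csInf ⟨dist (γg a) (γh b), γg a, ⟨a, rfl⟩, γh b, ⟨b, rfl⟩, rfl⟩ ?_
      rintro d ⟨x, ⟨s, rfl⟩, y, ⟨t, rfl⟩, rfl⟩
      rw [F s t]
      have h1 := abs_nonneg (s - a)
      have h2 := abs_nonneg (t - b)
      linarith
  set k := g * h with hkdef
  have hk : ∀ z : T, k z = g (h z) := fun z => rfl
  have hpow : ∀ (n : ℕ) (u v : T), dist ((k^n) u) ((k^n) v) = dist u v :=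
    fun n u v => (k^n).dist_eq u v
  have hstep : ∀ (n : ℕ) (z : T), (k^(n+1)) z = (k^n) (k z) := by
    intro n z; rw [pow_succ]; rfl
  have hstep' : ∀ (n : ℕ) (z : T), (k^(n+1)) z = k ((k^n) z) := by
    intro n z; rw [pow_succ']; rfl
  -- basic distance identities
  have hga : g (γg a) = γg (a + lg) := hgtr a
  have hq : h (γh b) = γh (b + lh) := hhtr b
  have e_qp : dist (γh b) (γg a) = D := by rw [dist_comm]
  have e_pgp : dist (γg a) (g (γg a)) = lg := by
    rw [hga, hγg, abs_of_nonpos (by linarith : a - (a + lg) ≤ 0)]; ring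
  have e_phq : dist (γg a) (h (γh b)) = D + lh := by
    rw [hq, F a (b + lh), sub_self, abs_zero, show b + lh - b = lh by ring,
      abs_of_nonneg hhpos.le]
    ring
  have e_qgp : dist (γh b) (g (γg a)) = D + lg := by
    rw [hga, dist_comm, F (a + lg) b, show a + lg - a = lg by ring, sub_self, abs_zero,
      abs_of_nonneg hgpos.le]
    ring
  have e_pkq : dist (γg a) (k (γh b)) = lg + (D + lh) := by
    have hga' : g (γg (a - lg)) = γg a := by
      rw [hgtr (a - lg), show a - lg + lg = a by ring]
    rw [hk, hq, ← hga', g.dist_eq, F (a - lg) (b + lh)]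
    rw [show a - lg - a = -lg by ring, show b + lh - b = lh by ring, abs_neg,
      abs_of_nonneg hgpos.le, abs_of_nonneg hhpos.le]
    ring
  -- dist from γg a to its h-translate: across the bridge twice
  have hmove : ∀ t : ℝ, dist (h (γg a)) (γh t) = dist (γg a) (γh (t - lh)) := by
    intro t
    conv_lhs => rw [show γh t = h (γh (t - lh)) by rw [hhtr (t - lh), show t - lh + lh = t by ring]]
    exact h.dist_eq _ _
  have hhp_proj : ∀ t : ℝ, dist (h (γg a)) (γh t) = dist (h (γg a)) (γh (b + lh)) + |t - (b + lh)| := by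
    intro t
    rw [hmove t, hmove (b + lh), hb (t - lh), hb (b + lh - lh)]
    rw [show b + lh - lh - b = (0:ℝ) by ring, show t - lh - b = t - (b + lh) by ring]
    simp
  have e_php : dist (γg a) (h (γg a)) = (D + lh) + D := by
    have hub : dist (γg a) (h (γg a)) ≤ D + lh + D := by
      have htr := dist_triangle4 (γg a) (γh b) (h (γh b)) (h (γg a))
      rw [hq] at htr
      have d1 : dist (γh b) (γh (b + lh)) = lh := by
        rw [hγh, show b - (b + lh) = -lh by ring, abs_neg, abs_of_nonneg hhpos.le]
      have d2 : dist (γh (b + lh)) (h (γg a)) = D := by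
        rw [← hq, h.dist_eq]
        exact e_qp
      rw [d1, d2] at htr
      rw [← hD] at htr
      linarith
    have hlb := gate H hγh hb hhp_proj (by linarith : b < b + lh)
    have d3 : dist (h (γg a)) (γh (b + lh)) = D := by
      rw [hmove (b + lh), show b + lh - lh = b by ring]
    rw [← hD, d3] at hlb
    linarith
  set L := D + lg + (D + lh) with hLdef
  -- the cornerstone: orbit distances grow linearly
  have key2 : ∀ n : ℕ, dist (γh b) ((k^n) (γh b)) = n * L
      ∧ dist (γh b) ((k^n) (γg a)) = n * L + D
      ∧ dist (γh b) ((k^n) (g (γg a))) = n * L + (D + lg) := by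
    intro n
    induction n with
    | zero =>
      refine ⟨by simp, ?_, ?_⟩
      · simpa using e_qp
      · simpa using e_qgp
    | succ n ih =>
      obtain ⟨A0, A1, A2⟩ := ih
      have B0 : dist (γh b) ((k^(n+1)) (γh b)) = (n+1 : ℕ) * L := by
        have step := chain_step H (x0 := γh b) (xprev := (k^n) (γg a))
          (xcur := (k^n) (g (γg a))) (xnext := (k^(n+1)) (γh b)) (d1 := lg) (d2 := D + lh)
          (by rw [hpow]; exact e_pgp)
          (by rw [hstep n (γh b), hpow, hk, g.dist_eq]; exact e_phq)
          (by rw [hstep n (γh b), hpow]; exact e_pkq)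
          hgpos
          (by rw [A1, A2]; ring)
        rw [step, A2]
        push_cast
        rw [hLdef]; ring
      have B1 : dist (γh b) ((k^(n+1)) (γg a)) = (n+1 : ℕ) * L + D := by
        have step := chain_step H (x0 := γh b) (xprev := (k^n) (g (γg a)))
          (xcur := (k^(n+1)) (γh b)) (xnext := (k^(n+1)) (γg a)) (d1 := D + lh) (d2 := D)
          (by rw [hstep n (γh b), hpow, hk, g.dist_eq]; exact e_phq)
          (by rw [hpow]; exact e_qp)
          (by rw [hstep n (γg a), hpow, hk, g.dist_eq]; exact e_php)
          (by linarith)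
          (by rw [A2, B0]; push_cast; rw [hLdef]; ring)
        rw [step, B0]
      have B2 : dist (γh b) ((k^(n+1)) (g (γg a))) = (n+1 : ℕ) * L + (D + lg) := by
        have step := chain_step H (x0 := γh b) (xprev := (k^(n+1)) (γh b))
          (xcur := (k^(n+1)) (γg a)) (xnext := (k^(n+1)) (g (γg a))) (d1 := D) (d2 := lg)
          (by rw [hpow]; exact e_qp)
          (by rw [hpow]; exact e_pgp)
          (by rw [hpow]; exact e_qgp)
          hDpos
          (by rw [B0, B1]; ring)
        rw [step, B1]; ring
      exact ⟨B0, B1, B2⟩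
  -- upper bound
  have hbdd : BddBelow (Set.range fun z : T => dist z (k z)) := by
    refine ⟨0, ?_⟩
    rintro v ⟨z, rfl⟩
    exact dist_nonneg
  have upper : translationLength k ≤ L := by
    have h1 : dist (γh b) (k (γh b)) = L := by
      have := (key2 1).1
      rw [pow_one] at this
      simpa using this
    calc translationLength k ≤ dist (γh b) (k (γh b)) := ciInf_le hbdd (γh b)
      _ = L := h1
  -- lower bound
  have lower : ∀ y : T, L ≤ dist y (k y) := by
    intro y
    have tele : ∀ n : ℕ, dist y ((k^n) y) ≤ n * dist y (k y) := by
      intro n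
      induction n with
      | zero => simp
      | succ n ih =>
        calc dist y ((k^(n+1)) y) = dist y (k ((k^n) y)) := by rw [hstep']
          _ ≤ dist y (k y) + dist (k y) (k ((k^n) y)) := dist_triangle _ _ _
          _ = dist y (k y) + dist y ((k^n) y) := by rw [k.dist_eq]
          _ ≤ dist y (k y) + n * dist y (k y) := by linarith
          _ = (n+1 : ℕ) * dist y (k y) := by push_cast; ring
    have bound : ∀ n : ℕ, (n : ℝ) * L ≤ 2 * dist (γh b) y + n * dist y (k y) := by
      intro n
      have h1 : (n : ℝ) * L = dist (γh b) ((k^n) (γh b)) := ((key2 n).1).symm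
      have h2 : dist (γh b) ((k^n) (γh b)) ≤ dist (γh b) y + dist y ((k^n) y)
          + dist ((k^n) y) ((k^n) (γh b)) := dist_triangle4 _ _ _ _
      rw [hpow n y (γh b), dist_comm y (γh b)] at h2
      have := tele n
      linarith
    by_contra hlt
    push_neg at hlt
    obtain ⟨n, hn⟩ := exists_nat_gt (2 * dist (γh b) y / (L - dist y (k y)))
    have hpos' : 0 < L - dist y (k y) := by linarith
    rw [div_lt_iff₀ hpos'] at hn
    rw [mul_sub] at hn
    have := bound n
    linarith
  have lower' : L ≤ translationLength k := le_ciInf lower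
  have hfinal : translationLength k = L := le_antisymm upper lower'
  rw [hS, hfinal, hLdef]
  ring


lemma tl_inv {T : Type*} [MetricSpace T] (h : T ≃ᵢ T) :
    translationLength h⁻¹ = translationLength h := by
  unfold translationLength
  congr 1
  funext x
  calc dist x (h⁻¹ x) = dist (h x) (h (h⁻¹ x)) := (h.dist_eq _ _).symm
    _ = dist (h x) x := by rw [IsometryEquiv.apply_inv_self]
    _ = dist x (h x) := dist_comm _ _

/-- If `g, h` are hyperbolic isometries of an ℝ-tree with disjoint axes, then
`‖gh‖ = ‖gh⁻¹‖ = ‖g‖ + ‖h‖ + 2 d(T_g, T_h)`. -/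
theorem stmt7 {T : Type*} [MetricSpace T] [Nonempty T] (hT : IsRTree T)
    (g h : T ≃ᵢ T) (γg γh : ℝ → T)
    (hγg : ∀ s t : ℝ, dist (γg s) (γg t) = |s - t|)
    (hγh : ∀ s t : ℝ, dist (γh s) (γh t) = |s - t|)
    (hgpos : 0 < translationLength g) (hhpos : 0 < translationLength h)
    (hgtr : ∀ t : ℝ, g (γg t) = γg (t + translationLength g))
    (hhtr : ∀ t : ℝ, h (γh t) = γh (t + translationLength h))
    (hdisj : Disjoint (Set.range γg) (Set.range γh)) :
    translationLength (g * h) =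
        translationLength g + translationLength h +
          2 * sInf {d : ℝ | ∃ x ∈ Set.range γg, ∃ y ∈ Set.range γh, d = dist x y} ∧
    translationLength (g * h⁻¹) =
        translationLength g + translationLength h +
          2 * sInf {d : ℝ | ∃ x ∈ Set.range γg, ∃ y ∈ Set.range γh, d = dist x y} := by
  constructor
  · exact master hT g h γg γh hγg hγh hgpos hhpos hgtr hhtr hdisj
  · have hrange : Set.range (fun t : ℝ => γh (-t)) = Set.range γh :=
      neg_surjective.range_comp γh
    have hinv : ∀ u : ℝ, h⁻¹ (γh u) = γh (u - translationLength h) := by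
      intro u
      have e := hhtr (u - translationLength h)
      rw [show u - translationLength h + translationLength h = u by ring] at e
      rw [← e, IsometryEquiv.inv_apply_self]
    have h1 := master hT g h⁻¹ γg (fun t => γh (-t)) hγg
      (fun s t => by
        show dist (γh (-s)) (γh (-t)) = |s - t|
        rw [hγh, show -s - -t = -(s - t) by ring, abs_neg])
      hgpos
      (by rw [tl_inv]; exact hhpos)
      hgtr
      (fun t => by
        show h⁻¹ (γh (-t)) = γh (-(t + translationLength h⁻¹))
        rw [tl_inv, hinv, show -t - translationLength h = -(t + translationLength h) by ring])
      (hrange.symm ▸ hdisj)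
    rw [tl_inv] at h1
    have hsets : {d : ℝ | ∃ x ∈ Set.range γg, ∃ y ∈ Set.range (fun t : ℝ => γh (-t)), d = dist x y}
        = {d : ℝ | ∃ x ∈ Set.range γg, ∃ y ∈ Set.range γh, d = dist x y} := by
      rw [hrange]
    rw [hsets] at h1
    exact h1
end

section
/- Let T be an ℝ-tree and let g, h be hyperbolic isometries of T satisfying ‖gh‖ = ‖g‖ + ‖h‖ (equivalently, their axes meet coherently or in a point). Then for all positive integers m, n, one has ‖g^m h^n‖ = m·‖g‖ + n·‖h‖. -/
/-!
In an ℝ-tree, if the axes of `g` and `h` are disjoint and joined by a bridge of length `δ > 0`,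
then `‖gh‖ = ‖g‖ + ‖h‖ + 2δ`; if they overlap with opposite orientations, then `gh` moves a point
of the overlap by less than `‖g‖ + ‖h‖`. Hence `‖gh‖ = ‖g‖ + ‖h‖` forces the axes to meet
coherently. The powers `gᵐ`, `hⁿ` translate along the same axes by `m‖g‖`, `n‖h‖`, so their axes
meet coherently as well, and then `‖gᵐhⁿ‖ = m‖g‖ + n‖h‖`: the upper bound is read off at a common
point, and the lower bound comes from a chain of points along the axis of the product whose
consecutive triples are aligned, which in a 0-hyperbolic space makes the whole chain geodesic.
-/

section

open Finset

variable {T : Type*} [MetricSpace T]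

theorem Isometry.dist_eq_abs {γ : ℝ → T} (hγ : Isometry γ) (s t : ℝ) :
    dist (γ s) (γ t) = |s - t| := by
  rw [hγ.dist_eq, Real.dist_eq]

structure IsTranslationAxis (f : T ≃ᵢ T) (γ : ℝ → T) (ℓ : ℝ) : Prop where
  isometry : Isometry γ
  map_apply : ∀ t, f (γ t) = γ (t + ℓ)

namespace IsTranslationAxis

variable {f : T ≃ᵢ T} {γ : ℝ → T} {ℓ : ℝ}

theorem comp_add (h : IsTranslationAxis f γ ℓ) (c : ℝ) :
    IsTranslationAxis f (fun u => γ (c + u)) ℓ :=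
  ⟨h.isometry.comp (isometry_add_left c), fun t => by rw [h.map_apply, add_assoc]⟩

theorem map_apply_sub (h : IsTranslationAxis f γ ℓ) (t : ℝ) : f (γ (t - ℓ)) = γ t := by
  rw [h.map_apply, sub_add_cancel]

theorem pow (h : IsTranslationAxis f γ ℓ) (k : ℕ) : IsTranslationAxis (f ^ k) γ (k * ℓ) := by
  refine ⟨h.isometry, fun t => ?_⟩
  induction k with
  | zero => simp
  | succ k ih =>
    rw [pow_succ', IsometryEquiv.mul_apply, ih, h.map_apply]
    push_cast
    ring_nf

end IsTranslationAxis

theorem dist_eq_add_of_dist_eq_add {x y q c : T} (hc : dist x c = dist x q + dist q c)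
    (hy : dist x q = dist x y + dist y q) : dist y c = dist y q + dist q c :=
  le_antisymm (dist_triangle _ _ _) (by linarith [dist_triangle x y c])

namespace ZeroHyperbolic

theorem eq_of_dist_add_dist_eq (hT : ZeroHyperbolic T) {p z x y : T}
    (hx : dist p x + dist x z = dist p z) (hp : dist p y = dist p x) (hz : dist y z = dist x z) :
    x = y := by
  have h := hT x y p z
  rw [dist_comm x p, dist_comm y p] at h
  rcases le_max_iff.1 h with h | h <;>
    exact dist_le_zero.1 (by linarith [dist_triangle p x z])

theorem dist_eq_add_add_of_dist_eq_add (hT : ZeroHyperbolic T) {x y z w : T}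
    (hxz : dist x z = dist x y + dist y z) (hyw : dist y w = dist y z + dist z w)
    (hyz : 0 < dist y z) : dist x w = dist x y + dist y z + dist z w := by
  have h := hT x z y w
  rw [dist_comm z y] at h
  rcases le_max_iff.1 h with h | h <;> linarith [dist_triangle4 x y z w]

/-- `dist p x + dist p y - dist x y` is twice the Gromov product `(x|y)_p`: the points at distance
at most `(x|y)_p` from `p` on geodesics towards `x` and towards `y` coincide. -/
theorem eq_of_two_mul_le (hT : ZeroHyperbolic T) {p x y x' y' : T} {α : ℝ}
    (hx' : dist p x' = α) (hx : dist p x = α + dist x' x)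
    (hy' : dist p y' = α) (hy : dist p y = α + dist y' y)
    (hα : 2 * α ≤ dist p x + dist p y - dist x y) : x' = y' := by
  have hx'y : dist x' y = dist y' y := by
    have h := hT x' y p x
    rw [dist_comm x' p, dist_comm y p, dist_comm y x] at h
    refine le_antisymm ?_ (by linarith [dist_triangle p x' y])
    rcases le_max_iff.1 h with h | h <;> linarith
  exact hT.eq_of_dist_add_dist_eq (z := y) (by linarith) (by rw [hx', hy']) hx'y.symm

theorem dist_eq_sum_of_aligned (hT : ZeroHyperbolic T) {c : ℕ → T}
    (hpos : ∀ i, 0 < dist (c i) (c (i + 1)))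
    (halign : ∀ i, dist (c i) (c (i + 2)) = dist (c i) (c (i + 1)) + dist (c (i + 1)) (c (i + 2)))
    (k : ℕ) : dist (c 0) (c k) = ∑ i ∈ range k, dist (c i) (c (i + 1)) := by
  have hstep : ∀ k, dist (c 0) (c (k + 1)) = dist (c 0) (c k) + dist (c k) (c (k + 1)) := by
    intro k
    induction k with
    | zero => simp
    | succ k ih => rw [hT.dist_eq_add_add_of_dist_eq_add ih (halign k) (hpos k), ih]
  induction k with
  | zero => simp
  | succ k ih => rw [hstep, ih, sum_range_succ]

end ZeroHyperbolic

namespace ZeroHyperbolic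

theorem dist_add_le_of_forall_le (hT : ZeroHyperbolic T) {γ : ℝ → T} (hγ : Isometry γ) {x : T}
    {p s : ℝ} (hmin : ∀ u, dist x (γ p) ≤ dist x (γ u)) (hps : p ≤ s) :
    dist x (γ p) + (s - p) ≤ dist x (γ s) := by
  rcases hps.eq_or_lt with rfl | hps
  · simp
  refine le_of_forall_pos_le_add fun ε hε => ?_
  have hε' := min_le_left ε (s - p)
  have hu : p < p + min ε (s - p) := lt_add_of_pos_right p (lt_min hε (by linarith))
  have h := hT x (γ (p + min ε (s - p))) (γ p) (γ s)
  rw [hγ.dist_eq_abs, hγ.dist_eq_abs, hγ.dist_eq_abs, abs_of_neg (by linarith),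
    abs_of_nonpos (by linarith [min_le_right ε (s - p)]), abs_of_pos (by linarith)] at h
  have := hmin (p + min ε (s - p))
  rcases le_max_iff.1 h with h | h <;> linarith

theorem dist_eq_add_abs_of_forall_le (hT : ZeroHyperbolic T) {γ : ℝ → T} (hγ : Isometry γ)
    {x : T} {p : ℝ} (hmin : ∀ u, dist x (γ p) ≤ dist x (γ u)) (s : ℝ) :
    dist x (γ s) = dist x (γ p) + |s - p| := by
  refine le_antisymm ?_ ?_
  · rw [← hγ.dist_eq_abs, dist_comm (γ s)]
    exact dist_triangle _ _ _
  rcases le_total p s with hps | hsp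
  · rw [abs_of_nonneg (sub_nonneg.2 hps)]
    exact hT.dist_add_le_of_forall_le hγ hmin hps
  · have hγ' : Isometry (γ ∘ Neg.neg) := hγ.comp isometry_neg
    have h := hT.dist_add_le_of_forall_le hγ' (p := -p) (s := -s)
      (fun u => by simpa using hmin (-u)) (neg_le_neg hsp)
    simp only [Function.comp_apply, neg_neg] at h
    rw [abs_of_nonpos (sub_nonpos.2 hsp)]
    linarith

theorem exists_dist_eq_add_abs (hT : ZeroHyperbolic T) {γ : ℝ → T} (hγ : Isometry γ) (x : T) :
    ∃ p, ∀ s, dist x (γ s) = dist x (γ p) + |s - p| := by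
  have hcoercive : Filter.Tendsto (fun s => dist x (γ s)) (Filter.cocompact ℝ) Filter.atTop := by
    refine Filter.tendsto_atTop_mono (fun s => ?_)
      (Filter.tendsto_atTop_add_const_right _ (-dist x (γ 0)) (tendsto_dist_left_cocompact_atTop 0))
    have := dist_triangle (γ 0) x (γ s)
    rw [hγ.dist_eq, dist_comm (γ 0)] at this
    linarith
  obtain ⟨p, hp⟩ := (continuous_const.dist hγ.continuous).exists_forall_le hcoercive
  exact ⟨p, hT.dist_eq_add_abs_of_forall_le hγ hp⟩

theorem dist_eq_abs_add_add_abs (hT : ZeroHyperbolic T) {γ₁ γ₂ : ℝ → T} (h₁ : Isometry γ₁)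
    (h₂ : Isometry γ₂) {s t δ : ℝ} (hδ : 0 < δ)
    (hs : ∀ u, dist (γ₂ t) (γ₁ u) = δ + |u - s|) (ht : ∀ v, dist (γ₁ s) (γ₂ v) = δ + |v - t|)
    (u v : ℝ) : dist (γ₁ u) (γ₂ v) = |u - s| + δ + |v - t| := by
  have h := hT (γ₁ u) (γ₂ t) (γ₁ s) (γ₂ v)
  have hst : dist (γ₁ s) (γ₂ t) = δ := by simpa using ht t
  rw [dist_comm (γ₁ u), hs, ht, h₁.dist_eq_abs, h₂.dist_eq_abs, dist_comm (γ₂ t), hst,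
    abs_sub_comm t] at h
  refine le_antisymm ?_ ?_
  · have := dist_triangle4 (γ₁ u) (γ₁ s) (γ₂ t) (γ₂ v)
    rw [h₁.dist_eq_abs, hst, h₂.dist_eq_abs, abs_sub_comm t] at this
    exact this
  · rcases le_max_iff.1 h with h | h <;> linarith

theorem dist_neg_eq_add (hT : ZeroHyperbolic T) {γ₁ γ₂ : ℝ → T} (h₁ : Isometry γ₁)
    (h₂ : Isometry γ₂) (h₀ : γ₁ 0 = γ₂ 0) (hcoh : ∀ s t, γ₁ s = γ₂ t → s = t) {u v : ℝ}
    (hu : 0 ≤ u) (hv : 0 ≤ v) : dist (γ₁ (-u)) (γ₂ v) = u + v := by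
  have d₁ : ∀ w, dist (γ₁ 0) (γ₁ (-w)) = |w| := fun w => by simp [h₁.dist_eq_abs]
  have d₂ : ∀ w, dist (γ₂ 0) (γ₂ w) = |w| := fun w => by simp [h₂.dist_eq_abs]
  refine le_antisymm ?_ (not_lt.1 fun hlt => ?_)
  · have := dist_triangle (γ₁ (-u)) (γ₁ 0) (γ₂ v)
    rwa [dist_comm (γ₁ (-u)) (γ₁ 0), d₁, h₀, d₂, abs_of_nonneg hu, abs_of_nonneg hv] at this
  have hv' : v ≤ u + dist (γ₁ (-u)) (γ₂ v) := by
    have := dist_triangle (γ₁ 0) (γ₁ (-u)) (γ₂ v)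
    rw [d₁, h₀, d₂, abs_of_nonneg hu, abs_of_nonneg hv] at this
    linarith
  have hu' : u ≤ v + dist (γ₁ (-u)) (γ₂ v) := by
    have := dist_triangle (γ₂ 0) (γ₂ v) (γ₁ (-u))
    rw [d₂, ← h₀, d₁, abs_of_nonneg hu, abs_of_nonneg hv, dist_comm] at this
    linarith
  set D := dist (γ₁ (-u)) (γ₂ v)
  set α := (u + v - D) / 2
  have hα : 0 < α := by simp only [α]; linarith
  have hmeet : γ₁ (-α) = γ₂ α := by
    refine hT.eq_of_two_mul_le (p := γ₁ 0) (x := γ₁ (-u)) (y := γ₂ v) (α := α) ?_ ?_ ?_ ?_ ?_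
    · rw [d₁, abs_of_pos hα]
    · rw [d₁, h₁.dist_eq_abs, abs_of_nonneg hu, abs_of_nonneg (by simp only [α]; linarith)]
      ring
    · rw [h₀, d₂, abs_of_pos hα]
    · rw [h₀, d₂, h₂.dist_eq_abs, abs_of_nonneg hv, abs_of_nonpos (by simp only [α]; linarith)]
      ring
    · rw [d₁, h₀, d₂, abs_of_nonneg hu, abs_of_nonneg hv]
      simp only [α, D]
      linarith
  linarith [hcoh _ _ hmeet]

end ZeroHyperbolic

theorem translationLength_le_dist (f : T ≃ᵢ T) (x : T) : translationLength f ≤ dist x (f x) :=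
  ciInf_le ⟨0, by rintro _ ⟨y, rfl⟩; exact dist_nonneg⟩ x

theorem dist_pow_apply_le (f : T ≃ᵢ T) (x : T) (k : ℕ) : dist x ((f ^ k) x) ≤ k * dist x (f x) := by
  induction k with
  | zero => simp
  | succ k ih =>
    have h := dist_triangle x (f x) ((f ^ (k + 1)) x)
    rw [pow_succ', IsometryEquiv.mul_apply, f.dist_eq] at h
    rw [pow_succ', IsometryEquiv.mul_apply]
    push_cast
    linarith

theorem le_translationLength_of_forall_le_dist_pow (f : T ≃ᵢ T) (p : T) {c : ℝ}
    (hp : ∀ k : ℕ, k * c ≤ dist p ((f ^ k) p)) : c ≤ translationLength f := by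
  have : Nonempty T := ⟨p⟩
  refine le_ciInf fun x => not_lt.1 fun hlt => ?_
  obtain ⟨k, hk⟩ := exists_nat_gt (2 * dist p x / (c - dist x (f x)))
  rw [div_lt_iff₀ (by linarith)] at hk
  have h := dist_triangle4 p x ((f ^ k) x) ((f ^ k) p)
  rw [(f ^ k).dist_eq, dist_comm x p] at h
  linarith [hp k, dist_pow_apply_le f x k]

theorem translationLength_mul_le {G H : T ≃ᵢ T} {γ₁ γ₂ : ℝ → T} {A B s₀ t₀ : ℝ}
    (hG : IsTranslationAxis G γ₁ A) (hH : IsTranslationAxis H γ₂ B) (h₀ : γ₁ s₀ = γ₂ t₀) :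
    translationLength (G * H) ≤ |A| + |B| := by
  calc translationLength (G * H) ≤ dist (γ₁ s₀) (G (H (γ₁ s₀))) := translationLength_le_dist _ _
    _ ≤ dist (γ₁ s₀) (G (γ₁ s₀)) + dist (G (γ₁ s₀)) (G (H (γ₁ s₀))) := dist_triangle _ _ _
    _ = |A| + |B| := by
      rw [G.dist_eq, hG.map_apply, hG.isometry.dist_eq_abs, h₀, hH.map_apply,
        hH.isometry.dist_eq_abs, sub_add_cancel_left, sub_add_cancel_left, abs_neg, abs_neg]

theorem exists_periodic_extension (f : T ≃ᵢ T) {n : ℕ} (hn : 0 < n) (p : Fin n → T) :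
    ∃ c : ℕ → T, (∀ i : Fin n, c i = p i) ∧ ∀ i, c (i + n) = f (c i) := by
  refine ⟨fun i => (f ^ (i / n)) (p ⟨i % n, Nat.mod_lt i hn⟩), fun i => ?_, fun i => ?_⟩
  · simp [Nat.div_eq_of_lt i.isLt, Nat.mod_eq_of_lt i.isLt]
  · simp only [Nat.add_div_right i hn, Nat.add_mod_right, pow_succ', IsometryEquiv.mul_apply]

namespace ZeroHyperbolic

theorem sum_le_translationLength (hT : ZeroHyperbolic T) (f : T ≃ᵢ T) {n : ℕ} (hn : 0 < n)
    {c : ℕ → T} (hper : ∀ i, c (i + n) = f (c i)) (hpos : ∀ i < n, 0 < dist (c i) (c (i + 1)))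
    (halign : ∀ i < n,
      dist (c i) (c (i + 2)) = dist (c i) (c (i + 1)) + dist (c (i + 1)) (c (i + 2))) :
    ∑ i ∈ range n, dist (c i) (c (i + 1)) ≤ translationLength f := by
  have hiter : ∀ q i, c (i + n * q) = (f ^ q) (c i) := by
    intro q
    induction q with
    | zero => simp
    | succ q ih => intro i; rw [pow_succ', IsometryEquiv.mul_apply, ← ih, ← hper]; ring_nf
  have hdist : ∀ q i j, dist (c (i + n * q)) (c (j + n * q)) = dist (c i) (c j) := by
    intro q i j; rw [hiter, hiter, IsometryEquiv.dist_eq]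
  have hred : ∀ i, ∃ j < n, ∃ q, i = j + n * q :=
    fun i => ⟨i % n, Nat.mod_lt i hn, i / n, (Nat.mod_add_div i n).symm⟩
  have hchain := hT.dist_eq_sum_of_aligned (c := c)
    (fun i => by
      obtain ⟨j, hj, q, rfl⟩ := hred i
      rw [add_right_comm, hdist]
      exact hpos j hj)
    (fun i => by
      obtain ⟨j, hj, q, rfl⟩ := hred i
      rw [add_right_comm j _ 1, add_right_comm j _ 2, hdist, hdist, hdist]
      exact halign j hj)
  have hsum : ∀ k : ℕ, ∑ i ∈ range (n * k), dist (c i) (c (i + 1)) =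
      k * ∑ i ∈ range n, dist (c i) (c (i + 1)) := by
    intro k
    induction k with
    | zero => simp
    | succ k ih =>
      rw [mul_add_one, sum_range_add, ih, Nat.cast_add_one, add_one_mul]
      congr 1
      refine sum_congr rfl fun i _ => ?_
      rw [add_comm (n * k) i, add_right_comm, hdist]
  refine le_translationLength_of_forall_le_dist_pow f (c 0) fun k => ?_
  rw [← hiter k 0, zero_add, hchain, hsum]

end ZeroHyperbolic

namespace ZeroHyperbolic

variable {G H : T ≃ᵢ T} {γ₁ γ₂ : ℝ → T} {A B : ℝ}

/-- The axis of `G * H` runs alternately along translates of `γ₁` and `γ₂`, joined by bridges of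
length `δ`; the chain samples each `γ₁`- and `γ₂`-piece at a quarter and at three quarters of its
length, so that any three consecutive points lie on two adjacent pieces. -/
theorem add_add_two_mul_le_translationLength_mul (hT : ZeroHyperbolic T)
    (hG : IsTranslationAxis G γ₁ A) (hH : IsTranslationAxis H γ₂ B) (hA : 0 < A) (hB : 0 < B)
    {δ : ℝ} (hδ : 0 ≤ δ)
    (h₁₂ : ∀ u v, 0 < u → 0 < v → dist (γ₁ (-u)) (γ₂ v) = u + δ + v)
    (h₂₁ : ∀ u v, 0 < u → 0 < v → dist (γ₂ (-u)) (γ₁ v) = u + δ + v) :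
    A + B + 2 * δ ≤ translationLength (G * H) := by
  obtain ⟨a, rfl⟩ : ∃ a, A = 4 * a := ⟨A / 4, by ring⟩
  obtain ⟨b, rfl⟩ : ∃ b, B = 4 * b := ⟨B / 4, by ring⟩
  have ha : 0 < a := by linarith
  have hb : 0 < b := by linarith
  have hG' : ∀ u, γ₁ (4 * a - u) = G (γ₁ (-u)) := fun u => by rw [hG.map_apply]; ring_nf
  have hH' : ∀ u, γ₂ (4 * b - u) = H (γ₂ (-u)) := fun u => by rw [hH.map_apply]; ring_nf
  have e₁ : γ₁ a = G (γ₁ (-(3 * a))) := by rw [← hG']; ring_nf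
  have e₃ : γ₁ (3 * a) = G (γ₁ (-a)) := by rw [← hG']; ring_nf
  have f₁ : γ₂ b = H (γ₂ (-(3 * b))) := by rw [← hH']; ring_nf
  have f₃ : γ₂ (3 * b) = H (γ₂ (-b)) := by rw [← hH']; ring_nf
  obtain ⟨c, hc, hper⟩ := exists_periodic_extension (G * H) (by norm_num : 0 < 4)
    ![γ₁ a, γ₁ (3 * a), G (γ₂ b), G (γ₂ (3 * b))]
  have c₀ : c 0 = γ₁ a := by simpa using hc 0
  have c₁ : c 1 = γ₁ (3 * a) := by simpa using hc 1
  have c₂ : c 2 = G (γ₂ b) := by simpa using hc 2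
  have c₃ : c 3 = G (γ₂ (3 * b)) := by simpa using hc 3
  have c₄ : c 4 = G (H (γ₁ a)) := by rw [← c₀]; exact hper 0
  have c₅ : c 5 = G (H (γ₁ (3 * a))) := by rw [← c₁]; exact hper 1
  have d₀₁ : dist (c 0) (c 1) = 2 * a := by
    rw [c₀, c₁, hG.isometry.dist_eq_abs, abs_of_neg (by linarith)]; ring
  have d₁₂ : dist (c 1) (c 2) = a + δ + b := by rw [c₁, c₂, e₃, G.dist_eq, h₁₂ _ _ ha hb]
  have d₂₃ : dist (c 2) (c 3) = 2 * b := by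
    rw [c₂, c₃, G.dist_eq, hH.isometry.dist_eq_abs, abs_of_neg (by linarith)]; ring
  have d₃₄ : dist (c 3) (c 4) = b + δ + a := by
    rw [c₃, c₄, G.dist_eq, f₃, H.dist_eq, h₂₁ _ _ hb ha]
  have d₀₂ : dist (c 0) (c 2) = 3 * a + δ + b := by
    rw [c₀, c₂, e₁, G.dist_eq, h₁₂ _ _ (by positivity) hb]
  have d₁₃ : dist (c 1) (c 3) = a + δ + 3 * b := by
    rw [c₁, c₃, e₃, G.dist_eq, h₁₂ _ _ ha (by positivity)]
  have d₂₄ : dist (c 2) (c 4) = 3 * b + δ + a := by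
    rw [c₂, c₄, G.dist_eq, f₁, H.dist_eq, h₂₁ _ _ (by positivity) ha]
  have d₃₅ : dist (c 3) (c 5) = b + δ + 3 * a := by
    rw [c₃, c₅, G.dist_eq, f₃, H.dist_eq, h₂₁ _ _ hb (by positivity)]
  have d₄₅ : dist (c 4) (c 5) = 2 * a := by rw [c₄, c₅, G.dist_eq, H.dist_eq, ← c₀, ← c₁, d₀₁]
  have key := hT.sum_le_translationLength (G * H) (by norm_num : 0 < 4) hper
    (fun i hi => by
      interval_cases i <;> simp only [zero_add, Nat.reduceAdd, d₀₁, d₁₂, d₂₃, d₃₄] <;> positivity)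
    (fun i hi => by
      interval_cases i <;>
        simp only [zero_add, Nat.reduceAdd, d₀₁, d₁₂, d₂₃, d₃₄, d₄₅, d₀₂, d₁₃, d₂₄, d₃₅] <;> ring)
  rw [sum_range_succ, sum_range_succ, sum_range_succ, sum_range_one, d₀₁, d₁₂, d₂₃, d₃₄] at key
  linarith

end ZeroHyperbolic

namespace ZeroHyperbolic

variable {G H : T ≃ᵢ T} {γ₁ γ₂ : ℝ → T} {A B : ℝ}

theorem translationLength_mul_lt_of_antiparallel (hT : ZeroHyperbolic T)
    (hG : IsTranslationAxis G γ₁ A) (hH : IsTranslationAxis H γ₂ B) (hA : 0 < A) (hB : 0 < B)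
    {u₀ u₁ v₀ v₁ : ℝ} (h₀ : γ₁ u₀ = γ₂ v₀) (h₁ : γ₁ u₁ = γ₂ v₁) (hu : u₀ < u₁)
    (hv : v₀ - v₁ = u₁ - u₀) : translationLength (G * H) < A + B := by
  set ε := min (u₁ - u₀) (min A B)
  have hε : 0 < ε := lt_min (by linarith) (lt_min hA hB)
  have hεu : ε ≤ u₁ - u₀ := min_le_left _ _
  have hεA : ε ≤ A := (min_le_right _ _).trans (min_le_left _ _)
  have hεB : ε ≤ B := (min_le_right _ _).trans (min_le_right _ _)
  have hd₁ := hG.isometry.dist_eq_abs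
  have hd₂ := hH.isometry.dist_eq_abs
  have hx : γ₁ (u₀ + ε) = γ₂ (v₀ - ε) := by
    refine hT.eq_of_dist_add_dist_eq (p := γ₁ u₀) (z := γ₁ u₁) ?_ ?_ ?_
    · rw [hd₁, hd₁, hd₁, abs_of_neg (by linarith), abs_of_nonpos (by linarith),
        abs_of_neg (by linarith)]
      ring
    · rw [hd₁, h₀, hd₂, abs_of_pos (by linarith), abs_of_neg (by linarith)]
      ring
    · rw [hd₁, h₁, hd₂, abs_of_nonneg (by linarith), abs_of_nonpos (by linarith)]
      linarith
  calc translationLength (G * H)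
      ≤ dist (γ₁ (u₀ + ε)) (G (H (γ₁ (u₀ + ε)))) := translationLength_le_dist _ _
    _ = dist (G (γ₁ (u₀ + ε - A))) (G (γ₂ (v₀ - ε + B))) := by
      rw [hG.map_apply_sub, ← hH.map_apply, ← hx]
    _ = dist (γ₁ (u₀ + ε - A)) (γ₂ (v₀ - ε + B)) := G.dist_eq _ _
    _ ≤ dist (γ₁ (u₀ + ε - A)) (γ₁ u₀) + dist (γ₂ v₀) (γ₂ (v₀ - ε + B)) := by
      rw [← h₀]; exact dist_triangle _ _ _
    _ = A - ε + (B - ε) := by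
      rw [hd₁, hd₂, abs_of_nonpos (by linarith), abs_of_nonpos (by linarith)]
      ring
    _ < A + B := by linarith

theorem sub_eq_sub_of_le_translationLength_mul (hT : ZeroHyperbolic T)
    (hG : IsTranslationAxis G γ₁ A) (hH : IsTranslationAxis H γ₂ B) (hA : 0 < A) (hB : 0 < B)
    (hle : A + B ≤ translationLength (G * H)) {s₀ t₀ s t : ℝ} (h₀ : γ₁ s₀ = γ₂ t₀)
    (h : γ₁ s = γ₂ t) : s - s₀ = t - t₀ := by
  have habs : |s - s₀| = |t - t₀| := by
    rw [← hG.isometry.dist_eq_abs, ← hH.isometry.dist_eq_abs, h, h₀]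
  rcases abs_eq_abs.1 habs with hpar | hanti
  · exact hpar
  rcases lt_trichotomy s s₀ with hs | rfl | hs
  · exact absurd hle <| not_le.2 <|
      hT.translationLength_mul_lt_of_antiparallel hG hH hA hB h h₀ hs (by linarith)
  · linarith
  · exact absurd hle <| not_le.2 <|
      hT.translationLength_mul_lt_of_antiparallel hG hH hA hB h₀ h hs (by linarith)

theorem translationLength_mul_eq_of_coherent (hT : ZeroHyperbolic T)
    (hG : IsTranslationAxis G γ₁ A) (hH : IsTranslationAxis H γ₂ B) (hA : 0 < A) (hB : 0 < B)
    {s₀ t₀ : ℝ} (h₀ : γ₁ s₀ = γ₂ t₀) (hcoh : ∀ s t, γ₁ s = γ₂ t → s - s₀ = t - t₀) :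
    translationLength (G * H) = A + B := by
  refine le_antisymm ?_ ?_
  · simpa [abs_of_pos hA, abs_of_pos hB] using translationLength_mul_le hG hH h₀
  have hG' := hG.comp_add s₀
  have hH' := hH.comp_add t₀
  have h₀' : γ₁ (s₀ + 0) = γ₂ (t₀ + 0) := by simpa using h₀
  have hcoh' : ∀ s t, γ₁ (s₀ + s) = γ₂ (t₀ + t) → s = t := fun s t h => by
    simpa using hcoh _ _ h
  simpa using hT.add_add_two_mul_le_translationLength_mul hG' hH' hA hB le_rfl
    (fun u v hu hv => by
      simpa using hT.dist_neg_eq_add hG'.isometry hH'.isometry h₀' hcoh' hu.le hv.le)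
    (fun u v hu hv => by
      simpa using hT.dist_neg_eq_add hH'.isometry hG'.isometry h₀'.symm
        (fun s t h => (hcoh' t s h.symm).symm) hu.le hv.le)

theorem exists_apply_eq_of_translationLength_mul_le (hT : ZeroHyperbolic T)
    (hG : IsTranslationAxis G γ₁ A) (hH : IsTranslationAxis H γ₂ B) (hA : 0 < A) (hB : 0 < B)
    (hle : translationLength (G * H) ≤ A + B) : ∃ s t, γ₁ s = γ₂ t := by
  by_contra! hdisj
  obtain ⟨s, hs⟩ := hT.exists_dist_eq_add_abs hG.isometry (γ₂ 0)
  obtain ⟨t, ht⟩ := hT.exists_dist_eq_add_abs hH.isometry (γ₁ s)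
  set δ := dist (γ₁ s) (γ₂ t)
  have hδ : 0 < δ := dist_pos.2 (hdisj s t)
  -- `γ₂ t` lies on a geodesic from `γ₂ 0` to its nearest point `γ₁ s` on `γ₁`, so the
  -- distances from `γ₂ t` to `γ₁` are also measured through `γ₁ s`
  have hs' : ∀ u, dist (γ₂ t) (γ₁ u) = δ + |u - s| := fun u => by
    rw [dist_eq_add_of_dist_eq_add (q := γ₁ s) (by rw [hs, hG.isometry.dist_eq_abs, abs_sub_comm])
      (by rw [dist_comm, ht, hH.isometry.dist_eq_abs, dist_comm, add_comm]), dist_comm,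
      hG.isometry.dist_eq_abs, abs_sub_comm]
  have hbridge := hT.dist_eq_abs_add_add_abs hG.isometry hH.isometry hδ hs' ht
  have := hT.add_add_two_mul_le_translationLength_mul (hG.comp_add s) (hH.comp_add t) hA hB
    hδ.le (fun u v hu hv => by simp [hbridge, abs_of_pos hu, abs_of_pos hv])
    (fun u v hu hv => by
      simp only [dist_comm, hbridge, add_sub_cancel_left, abs_neg, abs_of_pos hu, abs_of_pos hv]
      ring)
  linarith

end ZeroHyperbolic

end

theorem stmt8_general {T : Type*} [MetricSpace T] (hT : IsRTree T)
    (g h : T ≃ᵢ T) (γg γh : ℝ → T)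
    (hγg : ∀ s t : ℝ, dist (γg s) (γg t) = |s - t|)
    (hγh : ∀ s t : ℝ, dist (γh s) (γh t) = |s - t|)
    (hgpos : 0 < translationLength g) (hhpos : 0 < translationLength h)
    (hgtr : ∀ t : ℝ, g (γg t) = γg (t + translationLength g))
    (hhtr : ∀ t : ℝ, h (γh t) = γh (t + translationLength h))
    (hsum : translationLength (g * h) = translationLength g + translationLength h) :
    ∀ m n : ℕ, 1 ≤ m → 1 ≤ n →
      translationLength (g ^ m * h ^ n) =
        m * translationLength g + n * translationLength h := by
  intro m n hm hn
  have hg : IsTranslationAxis g γg (translationLength g) :=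
    ⟨Isometry.of_dist_eq fun s t => by rw [hγg, Real.dist_eq], hgtr⟩
  have hh : IsTranslationAxis h γh (translationLength h) :=
    ⟨Isometry.of_dist_eq fun s t => by rw [hγh, Real.dist_eq], hhtr⟩
  obtain ⟨s₀, t₀, h₀⟩ :=
    hT.2.exists_apply_eq_of_translationLength_mul_le hg hh hgpos hhpos hsum.le
  have hcoh : ∀ s t, γg s = γh t → s - s₀ = t - t₀ := fun s t =>
    hT.2.sub_eq_sub_of_le_translationLength_mul hg hh hgpos hhpos hsum.ge h₀
  exact hT.2.translationLength_mul_eq_of_coherent (hg.pow m) (hh.pow n)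
    (mul_pos (by exact_mod_cast hm) hgpos) (mul_pos (by exact_mod_cast hn) hhpos) h₀ hcoh

/-- If `g, h` are hyperbolic isometries of an ℝ-tree with
`‖gh‖ = ‖g‖ + ‖h‖` (coherent overlap or meeting in a point), then
`‖gᵐhⁿ‖ = m‖g‖ + n‖h‖` for all positive integers `m, n`. -/
theorem stmt8 {T : Type*} [MetricSpace T] [Nonempty T] (hT : IsRTree T)
    (g h : T ≃ᵢ T) (γg γh : ℝ → T)
    (hγg : ∀ s t : ℝ, dist (γg s) (γg t) = |s - t|)
    (hγh : ∀ s t : ℝ, dist (γh s) (γh t) = |s - t|)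
    (hgpos : 0 < translationLength g) (hhpos : 0 < translationLength h)
    (hgtr : ∀ t : ℝ, g (γg t) = γg (t + translationLength g))
    (hhtr : ∀ t : ℝ, h (γh t) = γh (t + translationLength h))
    (hsum : translationLength (g * h) = translationLength g + translationLength h) :
    ∀ m n : ℕ, 1 ≤ m → 1 ≤ n →
      translationLength (g ^ m * h ^ n) =
        m * translationLength g + n * translationLength h :=
  stmt8_general hT g h γg γh hγg hγh hgpos hhpos hgtr hhtr hsum
end

section
/- Let f : ℕ × ℕ → ℝ be bounded and axis-convex, i.e., for all m, the function n ↦ f(n,m) is convex and for all n, the function m ↦ f(n,m) is convex (in the sense 2·f ≤ shift-left + shift-right in each variable separately). Then the double limit lim_{n,m→∞} f(n,m) exists and equals both iterated limits lim_n lim_m f(n,m) and lim_m lim_n f(n,m). -/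
open Filter

lemma aux_antitone (g : ℕ → ℝ) (M : ℝ) (hb : ∀ n, |g n| ≤ M)
    (hc : ∀ n, 1 ≤ n → 2 * g n ≤ g (n + 1) + g (n - 1)) : Antitone g := by
  apply antitone_nat_of_succ_le
  intro k
  by_contra h
  push_neg at h
  set c := g (k + 1) - g k with hcdef
  have hc0 : 0 < c := by simp [hcdef]; linarith
  have hdmono : Monotone (fun n => g (n + 1) - g n) := by
    apply monotone_nat_of_le_succ
    intro n
    have := hc (n + 1) (by omega)
    simp only [Nat.add_sub_cancel] at this
    linarith
  have key : ∀ j : ℕ, g k + j * c ≤ g (k + j) := by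
    intro j
    induction j with
    | zero => simp
    | succ j ih =>
      have h1 : c ≤ g (k + j + 1) - g (k + j) := hdmono (Nat.le_add_right k j)
      push_cast
      have : k + (j + 1) = k + j + 1 := by ring
      rw [this]
      nlinarith
  obtain ⟨j, hj⟩ := exists_nat_gt ((2 * M) / c)
  have hjc : 2 * M < j * c := by
    rwa [div_lt_iff₀ hc0] at hj
  have h1 := key j
  have h2 := hb (k + j)
  have h3 := hb k
  rw [abs_le] at h2 h3
  linarith

/-- A bounded, axis-convex function `f : ℕ × ℕ → ℝ` has a double limit at
infinity, equal to both iterated limits. -/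
theorem stmt13 (f : ℕ → ℕ → ℝ)
    (hbdd : ∃ M : ℝ, ∀ n m : ℕ, |f n m| ≤ M)
    (hc1 : ∀ n m : ℕ, 1 ≤ n → 2 * f n m ≤ f (n + 1) m + f (n - 1) m)
    (hc2 : ∀ n m : ℕ, 1 ≤ m → 2 * f n m ≤ f n (m + 1) + f n (m - 1)) :
    ∃ L : ℝ,
      Tendsto (fun p : ℕ × ℕ => f p.1 p.2) (atTop ×ˢ atTop) (nhds L) ∧
      (∃ u : ℕ → ℝ, (∀ n, Tendsto (fun m => f n m) atTop (nhds (u n))) ∧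
        Tendsto u atTop (nhds L)) ∧
      (∃ v : ℕ → ℝ, (∀ m, Tendsto (fun n => f n m) atTop (nhds (v m))) ∧
        Tendsto v atTop (nhds L)) := by
  obtain ⟨M, hM⟩ := hbdd
  -- antitone in each variable
  have hA1 : ∀ m, Antitone (fun n => f n m) := fun m =>
    aux_antitone (fun n => f n m) M (fun n => hM n m) (fun n hn => hc1 n m hn)
  have hA2 : ∀ n, Antitone (fun m => f n m) := fun n =>
    aux_antitone (fun m => f n m) M (fun m => hM n m) (fun m hm => hc2 n m hm)
  set F : ℕ × ℕ → ℝ := fun p => f p.1 p.2 with hF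
  have hAF : Antitone F := by
    intro p q hpq
    calc F q = f q.1 q.2 := rfl
    _ ≤ f p.1 q.2 := hA1 q.2 hpq.1
    _ ≤ f p.1 p.2 := hA2 p.1 hpq.2
  have hbF : BddBelow (Set.range F) := by
    refine ⟨-M, ?_⟩
    rintro x ⟨p, rfl⟩
    have := hM p.1 p.2
    rw [abs_le] at this
    exact this.1
  set L : ℝ := ⨅ p, F p with hL
  have hTL : Tendsto F atTop (nhds L) := tendsto_atTop_ciInf hAF hbF
  have hbrow : ∀ n, BddBelow (Set.range (fun m => f n m)) := by
    intro n
    refine ⟨-M, ?_⟩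
    rintro x ⟨m, rfl⟩
    have := hM n m
    rw [abs_le] at this
    exact this.1
  have hbcol : ∀ m, BddBelow (Set.range (fun n => f n m)) := by
    intro m
    refine ⟨-M, ?_⟩
    rintro x ⟨n, rfl⟩
    have := hM n m
    rw [abs_le] at this
    exact this.1
  set u : ℕ → ℝ := fun n => ⨅ m, f n m with hu
  set v : ℕ → ℝ := fun m => ⨅ n, f n m with hv
  have hLu : ∀ n, L ≤ u n := fun n =>
    le_ciInf fun m => ciInf_le hbF (n, m)
  have hLv : ∀ m, L ≤ v m := fun m =>
    le_ciInf fun n => ciInf_le hbF (n, m)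
  have hbu : BddBelow (Set.range u) := ⟨L, by rintro x ⟨n, rfl⟩; exact hLu n⟩
  have hbv : BddBelow (Set.range v) := ⟨L, by rintro x ⟨m, rfl⟩; exact hLv m⟩
  have hAu : Antitone u := by
    intro a b hab
    exact le_ciInf fun m => (ciInf_le (hbrow b) m).trans (hA1 m hab)
  have hAv : Antitone v := by
    intro a b hab
    exact le_ciInf fun n => (ciInf_le (hbcol b) n).trans (hA2 n hab)
  have hiu : (⨅ n, u n) = L := by
    apply le_antisymm
    · exact le_ciInf fun p => (ciInf_le hbu p.1).trans (ciInf_le (hbrow p.1) p.2)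
    · exact le_ciInf hLu
  have hiv : (⨅ m, v m) = L := by
    apply le_antisymm
    · exact le_ciInf fun p => (ciInf_le hbv p.2).trans (ciInf_le (hbcol p.2) p.1)
    · exact le_ciInf hLv
  refine ⟨L, ?_, ⟨u, ?_, ?_⟩, ⟨v, ?_, ?_⟩⟩
  · rwa [prod_atTop_atTop_eq]
  · exact fun n => tendsto_atTop_ciInf (hA2 n) (hbrow n)
  · have := tendsto_atTop_ciInf hAu hbu
    rwa [hiu] at this
  · exact fun m => tendsto_atTop_ciInf (hA1 m) (hbcol m)
  · have := tendsto_atTop_ciInf hAv hbv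
    rwa [hiv] at this
end

section
/- Let T be an ℝ-tree and g, h elliptic isometries of T (each has a nonempty fixed-point set). If the fixed-point sets Fix(g) and Fix(h) are disjoint, then gh is a hyperbolic isometry and ‖gh‖ = ‖gh⁻¹‖ > 0; if they intersect, then ‖gh‖ = ‖gh⁻¹‖ = 0. -/
/-- Projection lemma: for an elliptic isometry `k` of an ℝ-tree and any `x`,
the midpoint of a geodesic from `x` to `k x` is fixed by `k`, and distances
to it are computed by the tree formula. -/
lemma rtree_proj {T : Type*} [MetricSpace T] (hT : IsRTree T) (k : T ≃ᵢ T)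
    (hk : ∃ z : T, k z = z) (x : T) :
    ∃ m : T, k m = m ∧ dist x m = dist x (k x) / 2 ∧
      ∀ z : T, dist z m = max (dist z x) (dist z (k x)) - dist x (k x) / 2 := by
  obtain ⟨z, hz⟩ := hk
  obtain ⟨f, hf0, hfl, hfd⟩ := hT.1 x (k x)
  set L := dist x (k x) with hL
  have hL0 : 0 ≤ L := dist_nonneg
  set m := f (L / 2) with hm
  have hmem : L / 2 ∈ Set.Icc (0 : ℝ) L := ⟨by linarith, by linarith⟩
  have hm1 : dist x m = L / 2 := by
    have := hfd 0 ⟨le_refl 0, hL0⟩ (L / 2) hmem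
    rw [hf0] at this
    rw [hm, this]
    rw [abs_of_nonpos (by linarith)]
    ring
  have hm2 : dist m (k x) = L / 2 := by
    have := hfd (L / 2) hmem L ⟨hL0, le_refl L⟩
    rw [hfl] at this
    rw [hm, this, abs_of_nonpos (by linarith)]
    ring
  have hF : ∀ z' : T, dist z' m = max (dist z' x) (dist z' (k x)) - L / 2 := by
    intro z'
    have h4 := hT.2 z' m x (k x)
    rw [← hL] at h4
    have e1 : dist m (k x) = L / 2 := hm2
    have e2 : dist m x = L / 2 := by rw [dist_comm]; exact hm1
    rw [e1, e2] at h4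
    have t1 : dist z' x ≤ dist z' m + L / 2 := by
      calc dist z' x ≤ dist z' m + dist m x := dist_triangle _ _ _
      _ = dist z' m + L / 2 := by rw [e2]
    have t2 : dist z' (k x) ≤ dist z' m + L / 2 := by
      calc dist z' (k x) ≤ dist z' m + dist m (k x) := dist_triangle _ _ _
      _ = dist z' m + L / 2 := by rw [e1]
    have hmax : max (dist z' x + L / 2) (dist z' (k x) + L / 2)
        = max (dist z' x) (dist z' (k x)) + L / 2 := (max_add_add_right _ _ _)
    rw [hmax] at h4
    have hub : dist z' m ≤ max (dist z' x) (dist z' (k x)) - L / 2 := by linarith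
    have hlb : max (dist z' x) (dist z' (k x)) - L / 2 ≤ dist z' m := by
      have := max_le (by linarith : dist z' x ≤ dist z' m + L / 2)
        (by linarith : dist z' (k x) ≤ dist z' m + L / 2)
      linarith
    linarith
  have hzx : dist z (k x) = dist z x := by
    conv_lhs => rw [← hz]
    exact k.dist_eq z x
  have hzm : dist z m = dist z x - L / 2 := by rw [hF z, hzx, max_self]
  have hfix : k m = m := by
    have d1 : dist (k m) (k x) = L / 2 := by
      rw [k.dist_eq]; rw [dist_comm]; exact hm1
    have d2 : dist (k m) z = dist z x - L / 2 := by
      conv_lhs => rw [← hz]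
      rw [k.dist_eq, dist_comm]
      exact hzm
    have h4 := hT.2 m (k m) z (k x)
    rw [hzx, d1, d2, hm2] at h4
    have hmz : dist m z = dist z x - L / 2 := by rw [dist_comm]; exact hzm
    rw [hmz] at h4
    have : dist m (k m) ≤ 0 := by
      have : max (dist z x - L / 2 + L / 2) (L / 2 + (dist z x - L / 2)) = dist z x := by
        rw [max_eq_left (by linarith)]; ring
      linarith
    have h0 : dist m (k m) = 0 := le_antisymm this dist_nonneg
    exact (dist_eq_zero.mp h0).symm
  exact ⟨m, hfix, hm1, hF⟩

/-- Pointwise lower bound: if `Δ` is a lower bound for distances between fixed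
points of `g` and fixed points of `k`, then `dist x (g (k x)) ≥ 2Δ`. -/
lemma rtree_lower {T : Type*} [MetricSpace T] (hT : IsRTree T) (g k : T ≃ᵢ T)
    (hg : ∃ z : T, g z = z) (hk : ∃ z : T, k z = z) (Δ : ℝ)
    (pairLB : ∀ a b : T, g a = a → k b = b → Δ ≤ dist a b) (x : T) :
    2 * Δ ≤ dist x (g (k x)) := by
  obtain ⟨q, hq, hqd, hqF⟩ := rtree_proj hT k hk x
  obtain ⟨p, hp, hpd, hpF⟩ := rtree_proj hT g hg (k x)
  set β := dist x (k x) / 2 with hβ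
  set α := dist (k x) (g (k x)) / 2 with hα
  set C := dist x (g (k x)) with hC
  have h1 : dist q (k x) = β := by
    have : dist q (k x) = dist (k q) (k x) := by rw [hq]
    rw [this, k.dist_eq, dist_comm]
    exact hqd
  have h2 : dist (g (k x)) q = max C (2 * α) - β := by
    rw [hqF (g (k x))]
    have e1 : dist (g (k x)) x = C := dist_comm _ _
    have e2 : dist (g (k x)) (k x) = 2 * α := by rw [dist_comm, hα]; ring
    rw [e1, e2]
  have h3 : dist q p = max β (max C (2 * α) - β) - α := by
    rw [hpF q, h1]
    have : dist q (g (k x)) = max C (2 * α) - β := by rw [dist_comm]; exact h2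
    rw [this]
  have hpair : Δ ≤ dist q p := by
    have := pairLB p q hp hq
    rwa [dist_comm] at this
  have hαβ : Δ ≤ α + β := by
    have htr : dist q p ≤ dist q (k x) + dist (k x) p := dist_triangle _ _ _
    rw [h1, hpd] at htr
    linarith
  have ht1 : dist (k x) (g (k x)) ≤ dist (k x) x + C := by
    have := dist_triangle (k x) x (g (k x))
    rw [← hC] at this; exact this
  have ht2 : dist x (k x) ≤ C + dist (g (k x)) (k x) := by
    have := dist_triangle x (g (k x)) (k x)
    rw [← hC] at this; exact this
  have e2α : dist (k x) (g (k x)) = 2 * α := by rw [hα]; ring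
  have e2β : dist x (k x) = 2 * β := by rw [hβ]; ring
  have hA : 2 * α ≤ 2 * β + C := by
    have e : dist (k x) x = 2 * β := by rw [dist_comm]; exact e2β
    rw [e, e2α] at ht1; linarith
  have hB : 2 * β ≤ C + 2 * α := by
    have e : dist (g (k x)) (k x) = 2 * α := by rw [dist_comm]; exact e2α
    rw [e, e2β] at ht2; linarith
  have hkey : Δ + α ≤ max β (max C (2 * α) - β) := by
    rw [h3] at hpair; linarith
  rcases le_max_iff.mp hkey with hc | hc
  · linarith
  · have : Δ + α + β ≤ max C (2 * α) := by linarith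
    rcases le_max_iff.mp this with hc2 | hc2
    · linarith
    · linarith

/-- For elliptic isometries `g, h` of an ℝ-tree: if their fixed-point sets are
disjoint, then `gh` is hyperbolic (has no fixed point) and
`‖gh‖ = ‖gh⁻¹‖ > 0`; if they intersect, then `‖gh‖ = ‖gh⁻¹‖ = 0`. -/
theorem stmt18 {T : Type*} [MetricSpace T] [Nonempty T] (hT : IsRTree T)
    (g h : T ≃ᵢ T)
    (hg : ∃ x : T, g x = x) (hh : ∃ x : T, h x = x) :
    (Disjoint {x : T | g x = x} {x : T | h x = x} →
      (∀ x : T, (g * h) x ≠ x) ∧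
        translationLength (g * h) = translationLength (g * h⁻¹) ∧
        0 < translationLength (g * h)) ∧
    (({x : T | g x = x} ∩ {x : T | h x = x}).Nonempty →
      translationLength (g * h) = 0 ∧ translationLength (g * h⁻¹) = 0) := by
  have bdd : ∀ k : T ≃ᵢ T, BddBelow (Set.range fun x : T => dist x (k x)) := by
    intro k
    refine ⟨0, ?_⟩
    rintro y ⟨x, rfl⟩
    exact dist_nonneg
  have hfixinv : ∀ b : T, h⁻¹ b = b ↔ h b = b := by
    intro b
    constructor
    · intro hb
      conv_lhs => rw [← hb]
      simp
    · intro hb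
      conv_lhs => rw [← hb]
      simp
  have hhinv : ∃ x : T, h⁻¹ x = x := by
    obtain ⟨x, hx⟩ := id hh
    exact ⟨x, (hfixinv x).mpr hx⟩
  constructor
  · intro hdisj
    -- build the mutual pair via the alternating projection chain
    obtain ⟨p₀, hp₀⟩ := id hg
    obtain ⟨q, hq, hqd, hqF⟩ := rtree_proj hT h hh p₀
    obtain ⟨p', hp', hpd', hpF'⟩ := rtree_proj hT g hg q
    obtain ⟨q'', hq'', hqd'', hqF''⟩ := rtree_proj hT h hh p'
    obtain ⟨p'', hp'', hpd'', hpF''⟩ := rtree_proj hT g hg q''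
    -- Fix-properties: dist m w = dist x w - dist x m for fixed w
    have fixdist : ∀ (k : T ≃ᵢ T) (w y : T), k w = w → dist w (k y) = dist w y := by
      intro k w y hw
      conv_lhs => rw [← hw]
      exact k.dist_eq w y
    have fprop : ∀ (k : T ≃ᵢ T) (x m : T),
        (dist x m = dist x (k x) / 2) →
        (∀ z : T, dist z m = max (dist z x) (dist z (k x)) - dist x (k x) / 2) →
        ∀ w : T, k w = w → dist m w = dist x w - dist x m := by
      intro k x m hd hF w hw
      have hwx : dist w (k x) = dist w x := fixdist k w x hw
      have h' := hF w
      rw [hwx, max_self] at h'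
      rw [dist_comm m w, h', hd, dist_comm w x]
    have fq := fprop h p₀ q hqd hqF
    have fp' := fprop g q p' hpd' hpF'
    have fq'' := fprop h p' q'' hqd'' hqF''
    have fp'' := fprop g q'' p'' hpd'' hpF''
    -- chain equalities
    have e1 : dist p' p₀ = dist p₀ q - dist q p' := by
      have := fp' p₀ hp₀
      rw [dist_comm q p₀] at this
      exact this
    have e2 : dist q'' q = dist q p' - dist p' q'' := by
      have := fq'' q hq
      rw [dist_comm p' q] at this
      exact this
    have e4 : dist p₀ q'' = dist p₀ q + dist q p' - dist p' q'' := by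
      have e3 := fq q'' hq''
      have : dist q q'' = dist q p' - dist p' q'' := by rw [dist_comm]; exact e2
      rw [this] at e3; linarith
    have e5 : dist q p' ≤ dist p' q'' := by
      have htr : dist p₀ q'' ≤ dist p₀ p' + dist p' q'' := dist_triangle _ _ _
      rw [e4, dist_comm p₀ p', e1] at htr
      linarith
    have e6 : dist p' q'' ≤ dist q p' := by
      have := dist_nonneg (x := q'') (y := q)
      rw [e2] at this; linarith
    have e23 : dist q p' = dist p' q'' := le_antisymm e5 e6
    -- second stabilization
    have f1 : dist p'' p' = dist p' q'' - dist q'' p'' := by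
      have := fp'' p' hp'
      rw [dist_comm q'' p'] at this
      exact this
    have f3 : dist q p'' = dist q p' + dist p' q'' - dist q'' p'' := by
      have f2 := fp' p'' hp''
      have : dist p' p'' = dist p' q'' - dist q'' p'' := by rw [dist_comm]; exact f1
      rw [this] at f2; linarith
    have f4 : dist p' q'' ≤ dist q'' p'' := by
      have htr : dist q p'' ≤ dist q q'' + dist q'' p'' := dist_triangle _ _ _
      rw [f3, dist_comm q q'', e2] at htr
      linarith
    have f5 : dist q'' p'' ≤ dist p' q'' := by
      have := dist_nonneg (x := p'') (y := p')
      rw [f1] at this; linarith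
    have e34 : dist p' q'' = dist q'' p'' := le_antisymm f4 f5
    have hpp : p'' = p' := by
      have : dist p'' p' = 0 := by rw [f1]; linarith
      exact dist_eq_zero.mp this
    -- the mutual pair (p', q'') at distance Δ
    have hΔpos : 0 < dist p' q'' := by
      rcases (dist_nonneg (x := p') (y := q'')).lt_or_eq with hlt | heq
      · exact hlt
      · exfalso
        have hPQ : p' = q'' := dist_eq_zero.mp heq.symm
        have hmem1 : p' ∈ {x : T | g x = x} := hp'
        have hmem2 : p' ∈ {x : T | h x = x} := by
          show h p' = p'
          rw [hPQ]; exact hq''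
        exact Set.disjoint_left.mp hdisj hmem1 hmem2
    have prop_a : ∀ a : T, g a = a → dist p' a = dist q'' a - dist p' q'' := by
      intro a ha
      have := fp'' a ha
      rw [hpp] at this
      rw [this, dist_comm q'' p']
    have prop_b : ∀ b : T, h b = b → dist q'' b = dist p' b - dist p' q'' := by
      intro b hb
      exact fq'' b hb
    -- global pair lower bound
    have pairLB : ∀ a b : T, g a = a → h b = b → dist p' q'' ≤ dist a b := by
      intro a b ha hb
      have h4 := hT.2 a q'' b p'
      have haq : dist a q'' = dist p' a + dist p' q'' := by
        have := prop_a a ha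
        rw [dist_comm a q'', this]; ring
      have hbp : dist b p' = dist q'' b + dist p' q'' := by
        have := prop_b b hb
        rw [dist_comm b p', this]; ring
      have hqp : dist q'' p' = dist p' q'' := dist_comm _ _
      have hap : dist a p' = dist p' a := dist_comm _ _
      rw [haq, hbp, hqp, hap] at h4
      rcases le_max_iff.mp h4 with hc | hc
      · have d1 : (0:ℝ) ≤ dist p' a := dist_nonneg
        have d2 : (0:ℝ) ≤ dist q'' b := dist_nonneg
        linarith
      · linarith
    have pairLBinv : ∀ a b : T, g a = a → h⁻¹ b = b → dist p' q'' ≤ dist a b := by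
      intro a b ha hb
      exact pairLB a b ha ((hfixinv b).mp hb)
    -- translation length bounds
    have lb : ∀ x : T, 2 * dist p' q'' ≤ dist x ((g * h) x) := by
      intro x
      have := rtree_lower hT g h hg hh (dist p' q'') pairLB x
      rwa [← IsometryEquiv.mul_apply] at this
    have lbinv : ∀ x : T, 2 * dist p' q'' ≤ dist x ((g * h⁻¹) x) := by
      intro x
      have := rtree_lower hT g h⁻¹ hg hhinv (dist p' q'') pairLBinv x
      rwa [← IsometryEquiv.mul_apply] at this
    have hgq : dist q'' (g q'') ≤ 2 * dist p' q'' := by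
      calc dist q'' (g q'') ≤ dist q'' p' + dist p' (g q'') := dist_triangle _ _ _
        _ = dist q'' p' + dist (g p') (g q'') := by rw [hp']
        _ = dist q'' p' + dist p' q'' := by rw [g.dist_eq]
        _ = 2 * dist p' q'' := by rw [dist_comm q'' p']; ring
    have ub : dist q'' ((g * h) q'') ≤ 2 * dist p' q'' := by
      have : (g * h) q'' = g q'' := by rw [IsometryEquiv.mul_apply, hq'']
      rw [this]; exact hgq
    have ubinv : dist q'' ((g * h⁻¹) q'') ≤ 2 * dist p' q'' := by
      have hQinv : h⁻¹ q'' = q'' := (hfixinv q'').mpr hq''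
      have : (g * h⁻¹) q'' = g q'' := by rw [IsometryEquiv.mul_apply, hQinv]
      rw [this]; exact hgq
    have tl_eq : translationLength (g * h) = 2 * dist p' q'' :=
      le_antisymm ((ciInf_le (bdd _) q'').trans ub) (le_ciInf lb)
    have tl_eq_inv : translationLength (g * h⁻¹) = 2 * dist p' q'' :=
      le_antisymm ((ciInf_le (bdd _) q'').trans ubinv) (le_ciInf lbinv)
    refine ⟨?_, ?_, ?_⟩
    · intro x hx
      have := lb x
      rw [hx, dist_self] at this
      linarith
    · rw [tl_eq, tl_eq_inv]
    · rw [tl_eq]; linarith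
  · rintro ⟨x, hgx, hhx⟩
    have hgx' : g x = x := hgx
    have hhx' : h x = x := hhx
    have nonneg : ∀ k : T ≃ᵢ T, 0 ≤ translationLength k :=
      fun k => le_ciInf fun x => dist_nonneg
    constructor
    · apply le_antisymm
      · have hz : dist x ((g * h) x) = 0 := by
          rw [IsometryEquiv.mul_apply, hhx', hgx', dist_self]
        calc translationLength (g * h) ≤ dist x ((g * h) x) := ciInf_le (bdd _) x
          _ = 0 := hz
      · exact nonneg _
    · apply le_antisymm
      · have hinv : h⁻¹ x = x := (hfixinv x).mpr hhx'
        have hz : dist x ((g * h⁻¹) x) = 0 := by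
          rw [IsometryEquiv.mul_apply, hinv, hgx', dist_self]
        calc translationLength (g * h⁻¹) ≤ dist x ((g * h⁻¹) x) := ciInf_le (bdd _) x
          _ = 0 := hz
      · exact nonneg _
end
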